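/- arXiv:1809.07490 — 5 statements merged into one kernel-verified Lean document; each statement's English description precedes it below -/
import Mathlib

section
/- Let d ≥ 2. In ℝ^d, consider elementary cubes of dimension d−1 (called faces), where an elementary cube is a product of d elementary intervals (each of the form [l,l+1] or [l,l] for l ∈ ℤ), exactly d−1 of which are nondegenerate. Two faces Q, Q′ are adjacent if their intersection Q ∩ Q′ is an elementary cube of dimension d−2. Then for any fixed face Q, the number of faces adjacent to Q is exactly 6(d−1). -/
open MeasureTheory Set Relation Filter

namespace HP

noncomputable section

/-- An elementary cube in `ℝ^d` is encoded by, for each coordinate, an integer `l`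
and a Boolean which is `true` for the nondegenerate interval `[l, l+1]` and
`false` for the degenerate interval `[l, l]`. -/
abbrev Cube (d : ℕ) := Fin d → ℤ × Bool

/-- The elementary interval `[l, l+1]` (nondegenerate) or `{l}` (degenerate). -/
def intervalSet (l : ℤ) (b : Bool) : Set ℝ :=
  if b then Set.Icc (l : ℝ) ((l : ℝ) + 1) else {(l : ℝ)}

/-- The subset of `ℝ^d` realized by an encoded elementary cube. -/
def cubeSet {d : ℕ} (c : Cube d) : Set (Fin d → ℝ) :=
  {x | ∀ i, x i ∈ intervalSet (c i).1 (c i).2}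

/-- The dimension of an elementary cube: the number of nondegenerate factors. -/
def cdim {d : ℕ} (c : Cube d) : ℕ :=
  (Finset.univ.filter (fun i => (c i).2 = true)).card

/-- A face in `ℝ^d` is an elementary cube of dimension `d-1`. -/
def IsFace {d : ℕ} (c : Cube d) : Prop := cdim c = d - 1

/-- Two faces are adjacent if their intersection is an elementary cube of dimension `d-2`. -/
def FaceAdj {d : ℕ} (Q Q' : Cube d) : Prop :=
  ∃ c : Cube d, cdim c = d - 2 ∧ cubeSet Q ∩ cubeSet Q' = cubeSet c

/-- The type of faces in `ℝ^d`. -/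
abbrev Face (d : ℕ) := {c : Cube d // IsFace c}

/-- The fixed face `Q₀ = [0,0] × [0,1]^(d-1)`. -/
def Q0 (d : ℕ) : Cube d := fun i => if (i : ℕ) = 0 then ((0 : ℤ), false) else ((0 : ℤ), true)

/-- A measure on `{0,1}^I` is the Bernoulli(p) product measure: it is a probability
measure and cylinder events have the product probabilities. -/
def IsBernoulliProduct {I : Type*} (p : ℝ) (μ : Measure (I → Bool)) : Prop :=
  IsProbabilityMeasure μ ∧
    ∀ (s : Finset I) (b : I → Bool),
      μ {ω | ∀ i ∈ s, ω i = b i}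
        = ∏ i ∈ s, (if b i = true then ENNReal.ofReal p else ENNReal.ofReal (1 - p))

/-- Open connectivity between faces: a chain of open, pairwise adjacent faces. -/
def faceOpenConn {d : ℕ} (ω : Face d → Bool) : Face d → Face d → Prop :=
  Relation.ReflTransGen (fun A B : Face d => FaceAdj A.1 B.1 ∧ ω A = true ∧ ω B = true)

/-- The open face cluster of a face `Q` (empty when `Q` is closed). -/
def faceCluster {d : ℕ} (ω : Face d → Bool) (Q : Face d) : Set (Face d) :=
  {Q' | ω Q = true ∧ ω Q' = true ∧ faceOpenConn ω Q Q'}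

/-- The random cubical set: the union of all open faces. -/
def K {d : ℕ} (ω : Face d → Bool) : Set (Fin d → ℝ) :=
  ⋃ (Q : Face d) (_ : ω Q = true), cubeSet Q.1

/-- The dual vertex `x* = x + (1/2, …, 1/2)`. -/
def dualPt {d : ℕ} (x : Fin d → ℤ) : Fin d → ℝ := fun i => (x i : ℝ) + 1/2

/-- The connected component of the complement of `K(ω)` containing the dual vertex `x*`. -/
def holeAt {d : ℕ} (ω : Face d → Bool) (x : Fin d → ℤ) : Set (Fin d → ℝ) :=
  connectedComponentIn (K ω)ᶜ (dualPt x)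

/-- A hole is a bounded connected component of the complement of `K(ω)`. -/
def IsHole {d : ℕ} (ω : Face d → Bool) (D : Set (Fin d → ℝ)) : Prop :=
  (∃ a ∈ (K ω)ᶜ, D = connectedComponentIn (K ω)ᶜ a) ∧ Bornology.IsBounded D

/-- The dual vertex `x*` lies in a hole. -/
def IsHolePt {d : ℕ} (ω : Face d → Bool) (x : Fin d → ℤ) : Prop :=
  dualPt x ∈ (K ω)ᶜ ∧ Bornology.IsBounded (holeAt ω x)

/-- Two holes are adjacent when they share a common boundary face. -/
def HoleAdj {d : ℕ} (ω : Face d → Bool) (D D' : Set (Fin d → ℝ)) : Prop :=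
  D ≠ D' ∧ ∃ Q : Cube d, IsFace Q ∧ cubeSet Q ⊆ frontier D ∧ cubeSet Q ⊆ frontier D'

/-- Connectivity in the hole graph. -/
def HoleConn {d : ℕ} (ω : Face d → Bool) :
    Set (Fin d → ℝ) → Set (Fin d → ℝ) → Prop :=
  Relation.ReflTransGen (fun A B => IsHole ω A ∧ IsHole ω B ∧ HoleAdj ω A B)

/-- The hole cluster of a hole `D`: all holes connected to it in the hole graph. -/
def holeCluster {d : ℕ} (ω : Face d → Bool) (D : Set (Fin d → ℝ)) :
    Set (Set (Fin d → ℝ)) :=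
  {D' | IsHole ω D' ∧ HoleConn ω D D'}

/-- The dual vertex `x*` lies in a hole belonging to an infinite hole cluster. -/
def InfClusterAt {d : ℕ} (ω : Face d → Bool) (x : Fin d → ℤ) : Prop :=
  IsHolePt ω x ∧ (holeCluster ω (holeAt ω x)).Infinite

/-- `x* ↔_hole y*` : both dual vertices lie in holes belonging to the same hole cluster. -/
def HoleConnPts {d : ℕ} (ω : Face d → Bool) (x y : Fin d → ℤ) : Prop :=
  IsHolePt ω x ∧ IsHolePt ω y ∧ HoleConn ω (holeAt ω x) (holeAt ω y)

/-- A set of holes is an infinite hole cluster. -/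
def IsInfCluster {d : ℕ} (ω : Face d → Bool) (G : Set (Set (Fin d → ℝ))) : Prop :=
  (∃ D, IsHole ω D ∧ G = holeCluster ω D) ∧ G.Infinite

/-- Nearest-neighbour adjacency on `ℤ^d` (ℓ¹-distance one). -/
def adjZ {d : ℕ} (x y : Fin d → ℤ) : Prop := (∑ i, |x i - y i|) = 1

/-- The occupied cell of the dual vertex `x*`: `∏ [(x*)_i - 1/2, (x*)_i + 1/2] = ∏ [x_i, x_i+1]`. -/
def cell {d : ℕ} (x : Fin d → ℤ) : Set (Fin d → ℝ) :=
  {y | ∀ i, y i ∈ Set.Icc (x i : ℝ) ((x i : ℝ) + 1)}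

/-- The face separating the occupied cells of two adjacent dual vertices. -/
def faceBetween {d : ℕ} (x y : Fin d → ℤ) : Cube d :=
  fun i => if x i = y i then (x i, true) else (max (x i) (y i), false)

/-- The dual bond between adjacent dual vertices is open iff the transversal face is closed. -/
def dualOpen {d : ℕ} (ω : Face d → Bool) (x y : Fin d → ℤ) : Prop :=
  adjZ x y ∧ ∀ Q : Face d, Q.1 = faceBetween x y → ω Q = false

/-- The open dual cluster of a dual vertex. -/
def dualCluster {d : ℕ} (ω : Face d → Bool) (x : Fin d → ℤ) : Set (Fin d → ℤ) :=
  {y | Relation.ReflTransGen (dualOpen ω) x y}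

/-- The box `B̃(n)` of dual vertices `x*` with `‖x*‖∞ < n`, indexed by `x ∈ ℤ^d`. -/
def BnZ (d n : ℕ) : Set (Fin d → ℤ) := {y | ∀ i, -(n:ℤ) ≤ y i ∧ y i < n}

/-- The hole at `x*` contains no dual vertex other than `x*`. -/
def SingletonHole {d : ℕ} (ω : Face d → Bool) (x : Fin d → ℤ) : Prop :=
  IsHolePt ω x ∧ ∀ y : Fin d → ℤ, dualPt y ∈ holeAt ω x → y = x

/-- Hole-graph connectivity avoiding the hole `D`. -/
def HoleConnAvoid {d : ℕ} (ω : Face d → Bool) (D : Set (Fin d → ℝ)) :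
    Set (Fin d → ℝ) → Set (Fin d → ℝ) → Prop :=
  Relation.ReflTransGen
    (fun A B => IsHole ω A ∧ IsHole ω B ∧ HoleAdj ω A B ∧ A ≠ D ∧ B ≠ D)

/-- The connected components of the hole cluster of `D` after deleting the vertex `D`. -/
def delComponents {d : ℕ} (ω : Face d → Bool) (D : Set (Fin d → ℝ)) :
    Set (Set (Set (Fin d → ℝ))) :=
  {Kc | ∃ E, IsHole ω E ∧ E ∈ holeCluster ω D ∧ E ≠ D ∧
        Kc = {F | IsHole ω F ∧ HoleConnAvoid ω D E F}}

/-- `x*` is a trifurcation: its hole is a singleton hole lying in an infinite hole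
cluster, and deleting it leaves exactly three components, all infinite. -/
def Trifurcation {d : ℕ} (ω : Face d → Bool) (x : Fin d → ℤ) : Prop :=
  SingletonHole ω x ∧ (holeCluster ω (holeAt ω x)).Infinite ∧
  (delComponents ω (holeAt ω x)).Finite ∧ (delComponents ω (holeAt ω x)).ncard = 3 ∧
  ∀ Kc ∈ delComponents ω (holeAt ω x), Kc.Infinite

/-! ### Auxiliary machinery for counting adjacent faces -/

/-- Combinatorial compatibility: the corresponding elementary intervals intersect. -/
def Compat (p q : ℤ × Bool) : Prop :=
  if p.2 then
    (if q.2 then (p.1 = q.1 ∨ p.1 = q.1 + 1 ∨ q.1 = p.1 + 1) else (q.1 = p.1 ∨ q.1 = p.1 + 1))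
  else
    (if q.2 then (p.1 = q.1 ∨ p.1 = q.1 + 1) else p.1 = q.1)

/-- The (encoded) intersection of two compatible elementary intervals. -/
def meet (p q : ℤ × Bool) : ℤ × Bool :=
  if p.2 then
    (if q.2 then (if p.1 = q.1 then (p.1, true) else (max p.1 q.1, false)) else (q.1, false))
  else (p.1, false)

lemma intervalSet_true (l : ℤ) : intervalSet l true = Set.Icc (l : ℝ) ((l : ℝ) + 1) := rfl

lemma intervalSet_false (l : ℤ) : intervalSet l false = {(l : ℝ)} := rfl

lemma Compat_tt (l m : ℤ) : Compat (l, true) (m, true) ↔ (l = m ∨ l = m + 1 ∨ m = l + 1) := Iff.rfl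

lemma Compat_tf (l m : ℤ) : Compat (l, true) (m, false) ↔ (m = l ∨ m = l + 1) := Iff.rfl

lemma Compat_ft (l m : ℤ) : Compat (l, false) (m, true) ↔ (l = m ∨ l = m + 1) := Iff.rfl

lemma Compat_ff (l m : ℤ) : Compat (l, false) (m, false) ↔ l = m := Iff.rfl

lemma compat_self (p : ℤ × Bool) : Compat p p := by
  rcases p with ⟨l, b⟩; cases b <;> simp [Compat]

lemma intCast_mem_intervalSet (l : ℤ) (b : Bool) : (l : ℝ) ∈ intervalSet l b := by
  cases b
  · rw [intervalSet_false]; exact rfl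
  · rw [intervalSet_true]; exact ⟨le_refl _, by linarith⟩

lemma intervalSet_inj {l m : ℤ} {b b' : Bool}
    (h : intervalSet l b = intervalSet m b') : l = m ∧ b = b' := by
  cases b <;> cases b' <;> simp only [intervalSet_true, intervalSet_false] at h
  · exact ⟨by exact_mod_cast (Set.singleton_eq_singleton_iff.1 h), rfl⟩
  · exfalso
    have h1 : (l : ℝ) ∈ Set.Icc (m : ℝ) (m + 1) := by rw [← h]; exact rfl
    have h2 : (m : ℝ) ∈ ({(l : ℝ)} : Set ℝ) := by
      rw [h]; exact ⟨le_refl _, by linarith⟩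
    have h3 : (m + 1 : ℝ) ∈ ({(l : ℝ)} : Set ℝ) := by
      rw [h]; exact ⟨by linarith, le_refl _⟩
    simp only [Set.mem_singleton_iff] at h2 h3
    linarith
  · exfalso
    have h2 : (l : ℝ) ∈ ({(m : ℝ)} : Set ℝ) := by
      rw [← h]; exact ⟨le_refl _, by linarith⟩
    have h3 : (l + 1 : ℝ) ∈ ({(m : ℝ)} : Set ℝ) := by
      rw [← h]; exact ⟨by linarith, le_refl _⟩
    simp only [Set.mem_singleton_iff] at h2 h3
    linarith
  · have h1 : (l : ℝ) ∈ Set.Icc (m : ℝ) (m + 1) := by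
      rw [← h]; exact ⟨le_refl _, by linarith⟩
    have h2 : (m : ℝ) ∈ Set.Icc (l : ℝ) (l + 1) := by
      rw [h]; exact ⟨le_refl _, by linarith⟩
    obtain ⟨hm, _⟩ := h1
    obtain ⟨hl, _⟩ := h2
    have : l = m := by exact_mod_cast le_antisymm hl hm
    exact ⟨this, rfl⟩

lemma compat_of_nonempty {p q : ℤ × Bool}
    (h : (intervalSet p.1 p.2 ∩ intervalSet q.1 q.2).Nonempty) : Compat p q := by
  obtain ⟨x, hx1, hx2⟩ := h
  rcases p with ⟨l, b⟩; rcases q with ⟨m, b'⟩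
  cases b <;> cases b' <;>
    simp only [intervalSet_true, intervalSet_false, Set.mem_Icc,
      Set.mem_singleton_iff] at hx1 hx2 <;>
    simp only [Compat_tt, Compat_tf, Compat_ft, Compat_ff]
  · exact_mod_cast hx1.symm.trans hx2
  · subst hx1
    have h1 : (m : ℤ) ≤ l := by exact_mod_cast hx2.1
    have h2 : (l : ℝ) ≤ m + 1 := hx2.2
    have h2' : (l : ℤ) ≤ m + 1 := by exact_mod_cast h2
    omega
  · subst hx2
    have h1 : (l : ℤ) ≤ m := by exact_mod_cast hx1.1
    have h2' : (m : ℤ) ≤ l + 1 := by exact_mod_cast hx1.2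
    omega
  · have h1 : (l : ℝ) ≤ m + 1 := le_trans hx1.1 hx2.2
    have h2 : (m : ℝ) ≤ l + 1 := le_trans hx2.1 hx1.2
    have h1' : (l : ℤ) ≤ m + 1 := by exact_mod_cast h1
    have h2' : (m : ℤ) ≤ l + 1 := by exact_mod_cast h2
    omega

lemma meet_fx (l : ℤ) (q : ℤ × Bool) : meet (l, false) q = (l, false) := rfl

lemma meet_tf (l m : ℤ) : meet (l, true) (m, false) = (m, false) := rfl

lemma meet_tt (l m : ℤ) :
    meet (l, true) (m, true) = if l = m then (l, true) else (max l m, false) := rfl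

lemma inter_eq_meet {p q : ℤ × Bool} (h : Compat p q) :
    intervalSet p.1 p.2 ∩ intervalSet q.1 q.2 = intervalSet (meet p q).1 (meet p q).2 := by
  rcases p with ⟨l, b⟩; rcases q with ⟨m, b'⟩
  cases b <;> cases b'
  · -- false, false
    rw [Compat_ff] at h
    subst h
    rw [meet_fx]
    simp [intervalSet_false]
  · -- false, true
    rw [Compat_ft] at h
    rw [meet_fx]
    simp only [intervalSet_true, intervalSet_false]
    refine Set.inter_eq_left.2 (Set.singleton_subset_iff.2 ?_)
    rcases h with h | h
    · subst h; exact ⟨le_refl _, by linarith⟩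
    · subst h; push_cast; constructor <;> linarith
  · -- true, false
    rw [Compat_tf] at h
    rw [meet_tf]
    simp only [intervalSet_true, intervalSet_false]
    refine Set.inter_eq_right.2 (Set.singleton_subset_iff.2 ?_)
    rcases h with h | h
    · subst h; exact ⟨le_refl _, by linarith⟩
    · subst h; push_cast; constructor <;> linarith
  · -- true, true
    rw [Compat_tt] at h
    rw [meet_tt]
    by_cases he : l = m
    · subst he
      simp [intervalSet_true]
    · rw [if_neg he]
      rcases h with h | h | h
      · exact absurd h he
      · subst h
        have hmax : max (m + 1) m = m + 1 := by omega
        simp only [intervalSet_true, intervalSet_false, hmax]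
        rw [Set.Icc_inter_Icc]
        push_cast
        have h1 : max ((m : ℝ) + 1) m = m + 1 := by rw [max_eq_left]; linarith
        have h2 : min ((m : ℝ) + 1 + 1) (m + 1) = m + 1 := by rw [min_eq_right]; linarith
        rw [h1, h2, Set.Icc_self]
      · subst h
        have hmax : max l (l + 1) = l + 1 := by omega
        simp only [intervalSet_true, intervalSet_false, hmax]
        rw [Set.Icc_inter_Icc]
        push_cast
        have h1 : max (l : ℝ) (l + 1) = l + 1 := by rw [max_eq_right]; linarith
        have h2 : min ((l : ℝ) + 1) (l + 1 + 1) = l + 1 := by rw [min_eq_left]; linarith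
        rw [h1, h2, Set.Icc_self]

lemma meet_snd (p q : ℤ × Bool) :
    (meet p q).2 = true ↔ (p.2 = true ∧ q.2 = true ∧ p.1 = q.1) := by
  rcases p with ⟨l, b⟩; rcases q with ⟨m, b'⟩
  cases b <;> cases b'
  · rw [meet_fx]; simp
  · rw [meet_fx]; simp
  · rw [meet_tf]; simp
  · rw [meet_tt]; by_cases he : l = m <;> simp [he]

lemma cubeSet_eq_pi {d : ℕ} (c : Cube d) :
    cubeSet c = Set.pi Set.univ (fun i => intervalSet (c i).1 (c i).2) := by
  ext x; simp [cubeSet, Set.mem_pi]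

lemma cubeSet_nonempty {d : ℕ} (c : Cube d) : (cubeSet c).Nonempty :=
  ⟨fun i => ((c i).1 : ℝ), fun i => intCast_mem_intervalSet _ _⟩

lemma cubeSet_inj {d : ℕ} {c c' : Cube d} (h : cubeSet c = cubeSet c') : c = c' := by
  funext i
  have hne : (Set.pi Set.univ (fun i => intervalSet (c i).1 (c i).2)).Nonempty := by
    rw [← cubeSet_eq_pi]; exact cubeSet_nonempty c
  have hne' : (Set.pi Set.univ (fun i => intervalSet (c' i).1 (c' i).2)).Nonempty := by
    rw [← cubeSet_eq_pi]; exact cubeSet_nonempty c'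
  have h1 := Set.eval_image_pi (Set.mem_univ i) hne
  have h2 := Set.eval_image_pi (Set.mem_univ i) hne'
  have hpi : Set.pi Set.univ (fun i => intervalSet (c i).1 (c i).2)
      = Set.pi Set.univ (fun i => intervalSet (c' i).1 (c' i).2) := by
    rw [← cubeSet_eq_pi, ← cubeSet_eq_pi, h]
  rw [hpi] at h1
  obtain ⟨h3, h4⟩ := intervalSet_inj (h1.symm.trans h2)
  exact Prod.ext h3 h4

lemma cubeSet_inter {d : ℕ} {Q Q' : Cube d} (h : ∀ i, Compat (Q i) (Q' i)) :
    cubeSet Q ∩ cubeSet Q' = cubeSet (fun i => meet (Q i) (Q' i)) := by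
  ext x
  simp only [cubeSet, Set.mem_inter_iff, Set.mem_setOf_eq]
  rw [← forall_and]
  refine forall_congr' fun i => ?_
  rw [← Set.mem_inter_iff, inter_eq_meet (h i)]

lemma faceAdj_iff {d : ℕ} (Q Q' : Cube d) :
    FaceAdj Q Q' ↔ (∀ i, Compat (Q i) (Q' i)) ∧
      cdim (fun i => meet (Q i) (Q' i)) = d - 2 := by
  constructor
  · rintro ⟨c, hc, heq⟩
    have hne : (cubeSet Q ∩ cubeSet Q').Nonempty := heq ▸ cubeSet_nonempty c
    obtain ⟨x, hx1, hx2⟩ := hne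
    have hcompat : ∀ i, Compat (Q i) (Q' i) := fun i =>
      compat_of_nonempty ⟨x i, hx1 i, hx2 i⟩
    have hcc : cubeSet c = cubeSet (fun i => meet (Q i) (Q' i)) := by
      rw [← heq, cubeSet_inter hcompat]
    refine ⟨hcompat, ?_⟩
    rw [← cubeSet_inj hcc]; exact hc
  · rintro ⟨h1, h2⟩; exact ⟨_, h2, (cubeSet_inter h1).symm ▸ rfl⟩

lemma cdim_eq {d : ℕ} (c : Cube d) (s : Finset (Fin d))
    (h : ∀ i, (c i).2 = true ↔ i ∈ s) : cdim c = s.card := by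
  unfold cdim
  congr 1
  ext i
  simp [h i]

/-- Structure of a face: there is a unique degenerate coordinate. -/
lemma face_structure {d : ℕ} (hd : 1 ≤ d) {c : Cube d} (hc : IsFace c) :
    ∃ j : Fin d, ∀ i, ((c i).2 = true ↔ i ≠ j) := by
  have h1 : (Finset.univ.filter (fun i => (c i).2 = true)).card = d - 1 := hc
  have h2 := Finset.card_filter_add_card_filter_not
    (s := (Finset.univ : Finset (Fin d))) (p := fun i => (c i).2 = true)
  rw [Finset.card_univ, Fintype.card_fin] at h2
  have h3 : (Finset.univ.filter (fun i => ¬((c i).2 = true))).card = 1 := by omega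
  obtain ⟨j, hj⟩ := Finset.card_eq_one.1 h3
  refine ⟨j, fun i => ?_⟩
  constructor
  · intro ht hij
    subst hij
    have : i ∈ ({i} : Finset (Fin d)) := Finset.mem_singleton_self i
    rw [← hj, Finset.mem_filter] at this
    exact this.2 ht
  · intro hij
    by_contra ht
    have : i ∈ Finset.univ.filter (fun i => ¬((c i).2 = true)) :=
      Finset.mem_filter.2 ⟨Finset.mem_univ i, ht⟩
    rw [hj, Finset.mem_singleton] at this
    exact hij this

/-- The parametrization of faces adjacent to `Q` (with degenerate coordinate `i₀`):
`Sum.inl ε` at `k` shifts coordinate `k` by `±1`; `Sum.inr (ε, δ)` at `j` makes the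
cube nondegenerate at `i₀` (choice `ε`) and degenerate at `j` (choice `δ`). -/
def adjFace {d : ℕ} (Q : Cube d) (i₀ : Fin d) : (Bool ⊕ Bool × Bool) → Fin d → Cube d
  | Sum.inl ε, k => fun i =>
      if i = k then ((Q k).1 + (if ε then 1 else -1), true) else Q i
  | Sum.inr (ε, δ), j => fun i =>
      if i = i₀ then ((Q i₀).1 - (if ε then 1 else 0), true)
      else if i = j then ((Q j).1 + (if δ then 1 else 0), false)
      else Q i

section Fixed

variable {d : ℕ} (Q : Cube d) (i₀ : Fin d)
variable (h0 : ∀ i, (Q i).2 = true ↔ i ≠ i₀)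

lemma adjFace_inl_self (ε : Bool) (k : Fin d) :
    adjFace Q i₀ (Sum.inl ε) k k = ((Q k).1 + (if ε then 1 else -1), true) := if_pos rfl

lemma adjFace_inl_ne (ε : Bool) {k i : Fin d} (h : i ≠ k) :
    adjFace Q i₀ (Sum.inl ε) k i = Q i := if_neg h

lemma adjFace_inr_i₀ (ε δ : Bool) (k : Fin d) :
    adjFace Q i₀ (Sum.inr (ε, δ)) k i₀ = ((Q i₀).1 - (if ε then 1 else 0), true) := if_pos rfl

lemma adjFace_inr_self (ε δ : Bool) {k : Fin d} (h : k ≠ i₀) :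
    adjFace Q i₀ (Sum.inr (ε, δ)) k k = ((Q k).1 + (if δ then 1 else 0), false) := by
  show (if k = i₀ then _ else if k = k then _ else _) = _
  rw [if_neg h, if_pos rfl]

lemma adjFace_inr_ne (ε δ : Bool) {k i : Fin d} (h1 : i ≠ i₀) (h2 : i ≠ k) :
    adjFace Q i₀ (Sum.inr (ε, δ)) k i = Q i := by
  show (if i = i₀ then _ else if i = k then _ else _) = _
  rw [if_neg h1, if_neg h2]

lemma card_erase_one (hd : 1 ≤ d) : (Finset.univ.erase i₀ : Finset (Fin d)).card = d - 1 := by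
  rw [Finset.card_erase_of_mem (Finset.mem_univ i₀), Finset.card_univ, Fintype.card_fin]

lemma card_erase_two {k : Fin d} (hk : k ≠ i₀) (hd : 2 ≤ d) :
    ((Finset.univ.erase i₀).erase k : Finset (Fin d)).card = d - 2 := by
  rw [Finset.card_erase_of_mem
    (Finset.mem_erase.2 ⟨hk, Finset.mem_univ k⟩)]
  rw [Finset.card_erase_of_mem (Finset.mem_univ i₀), Finset.card_univ, Fintype.card_fin]
  omega

include h0 in
lemma adjFace_isFace (hd : 2 ≤ d) (t : Bool ⊕ Bool × Bool) {k : Fin d} (hk : k ≠ i₀) :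
    IsFace (adjFace Q i₀ t k) := by
  unfold IsFace
  match t with
  | Sum.inl ε =>
    rw [cdim_eq _ (Finset.univ.erase i₀), card_erase_one i₀ (by omega)]
    intro i
    simp only [Finset.mem_erase, Finset.mem_univ, and_true]
    by_cases hik : i = k
    · subst hik; rw [adjFace_inl_self]; simp [hk]
    · rw [adjFace_inl_ne Q i₀ ε hik]; exact h0 i
  | Sum.inr (ε, δ) =>
    rw [cdim_eq _ (Finset.univ.erase k), card_erase_one k (by omega)]
    intro i
    simp only [Finset.mem_erase, Finset.mem_univ, and_true]
    by_cases hii : i = i₀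
    · subst hii; rw [adjFace_inr_i₀]; simp [Ne.symm hk]
    · by_cases hik : i = k
      · subst hik; rw [adjFace_inr_self Q i₀ ε δ hk]; simp
      · rw [adjFace_inr_ne Q i₀ ε δ hii hik]
        rw [h0 i]
        simp [hii, hik]

include h0 in
lemma adjFace_adj (hd : 2 ≤ d) (t : Bool ⊕ Bool × Bool) {k : Fin d} (hk : k ≠ i₀) :
    FaceAdj Q (adjFace Q i₀ t k) := by
  rw [faceAdj_iff]
  have hQk : (Q k).2 = true := (h0 k).2 hk
  have hQi₀ : (Q i₀).2 = false := by
    have := (h0 i₀); simp at this; exact this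
  match t with
  | Sum.inl ε =>
    constructor
    · intro i
      by_cases hik : i = k
      · subst hik
        rw [adjFace_inl_self]
        have hq : Q i = ((Q i).1, true) := Prod.ext rfl hQk
        rw [hq, Compat_tt]
        cases ε <;> simp <;> omega
      · rw [adjFace_inl_ne Q i₀ ε hik]
        exact compat_self _
    · rw [cdim_eq _ ((Finset.univ.erase i₀).erase k), card_erase_two i₀ hk hd]
      intro i
      rw [meet_snd]
      simp only [Finset.mem_erase, Finset.mem_univ, and_true]
      by_cases hik : i = k
      · subst hik
        rw [adjFace_inl_self]
        simp only [hQk, true_and]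
        cases ε <;> simp <;> omega
      · rw [adjFace_inl_ne Q i₀ ε hik]
        by_cases hii : i = i₀
        · subst hii; simp [hQi₀, Ne.symm hk]
        · simp [hii, hik, (h0 i).2 hii]
  | Sum.inr (ε, δ) =>
    constructor
    · intro i
      by_cases hii : i = i₀
      · subst hii
        rw [adjFace_inr_i₀]
        have hq : Q i = ((Q i).1, false) := Prod.ext rfl hQi₀
        rw [hq, Compat_ft]
        cases ε <;> simp <;> omega
      · by_cases hik : i = k
        · subst hik
          rw [adjFace_inr_self Q i₀ ε δ hk]
          have hq : Q i = ((Q i).1, true) := Prod.ext rfl hQk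
          rw [hq, Compat_tf]
          cases δ <;> simp
        · rw [adjFace_inr_ne Q i₀ ε δ hii hik]
          exact compat_self _
    · rw [cdim_eq _ ((Finset.univ.erase i₀).erase k), card_erase_two i₀ hk hd]
      intro i
      rw [meet_snd]
      simp only [Finset.mem_erase, Finset.mem_univ, and_true]
      by_cases hii : i = i₀
      · subst hii
        rw [adjFace_inr_i₀]
        simp [hQi₀, Ne.symm hk]
      · by_cases hik : i = k
        · subst hik
          rw [adjFace_inr_self Q i₀ ε δ hk]
          simp [hii]
        · rw [adjFace_inr_ne Q i₀ ε δ hii hik]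
          simp [hii, hik, (h0 i).2 hii]

include h0 in
lemma adjFace_injective {t t' : Bool ⊕ Bool × Bool} {k k' : Fin d}
    (hk : k ≠ i₀) (hk' : k' ≠ i₀)
    (heq : adjFace Q i₀ t k = adjFace Q i₀ t' k') : t = t' ∧ k = k' := by
  have hQk : (Q k).2 = true := (h0 k).2 hk
  have hQk' : (Q k').2 = true := (h0 k').2 hk'
  have hQi₀ : (Q i₀).2 = false := by
    have := (h0 i₀); simp at this; exact this
  match t, t' with
  | Sum.inl ε, Sum.inl ε' =>
    have hkk : k = k' := by
      by_contra hne
      have h1 := congrFun heq k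
      rw [adjFace_inl_self, adjFace_inl_ne Q i₀ ε' hne] at h1
      have e1 : (Q k).1 + (if ε then 1 else -1) = (Q k).1 := congrArg Prod.fst h1
      cases ε <;> simp at e1 <;> omega
    subst hkk
    have h1 := congrFun heq k
    rw [adjFace_inl_self, adjFace_inl_self] at h1
    have e1 : (Q k).1 + (if ε then 1 else -1) = (Q k).1 + (if ε' then 1 else -1) :=
      congrArg Prod.fst h1
    refine ⟨?_, rfl⟩
    cases ε <;> cases ε' <;> simp at e1 <;> first | rfl | omega
  | Sum.inl ε, Sum.inr (ε', δ') =>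
    exfalso
    have h1 := congrFun heq i₀
    rw [adjFace_inl_ne Q i₀ ε (Ne.symm hk), adjFace_inr_i₀] at h1
    have : (Q i₀).2 = true := congrArg Prod.snd h1
    rw [hQi₀] at this; cases this
  | Sum.inr (ε, δ), Sum.inl ε' =>
    exfalso
    have h1 := congrFun heq i₀
    rw [adjFace_inl_ne Q i₀ ε' (Ne.symm hk'), adjFace_inr_i₀] at h1
    have : (Q i₀).2 = true := congrArg Prod.snd h1.symm
    rw [hQi₀] at this; cases this
  | Sum.inr (ε, δ), Sum.inr (ε', δ') =>
    have hkk : k = k' := by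
      by_contra hne
      have h1 := congrFun heq k
      rw [adjFace_inr_self Q i₀ ε δ hk, adjFace_inr_ne Q i₀ ε' δ' hk hne] at h1
      have h2 : (false : Bool) = (Q k).2 := congrArg Prod.snd h1
      rw [hQk] at h2; cases h2
    subst hkk
    have h1 := congrFun heq i₀
    rw [adjFace_inr_i₀, adjFace_inr_i₀] at h1
    have e1 : (Q i₀).1 - (if ε then 1 else 0) = (Q i₀).1 - (if ε' then 1 else 0) :=
      congrArg Prod.fst h1
    have h2 := congrFun heq k
    rw [adjFace_inr_self Q i₀ ε δ hk, adjFace_inr_self Q i₀ ε' δ' hk] at h2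
    have e2 : (Q k).1 + (if δ then 1 else 0) = (Q k).1 + (if δ' then 1 else 0) :=
      congrArg Prod.fst h2
    have hee : ε = ε' := by cases ε <;> cases ε' <;> simp at e1 <;> first | rfl | omega
    have hdd : δ = δ' := by cases δ <;> cases δ' <;> simp at e2 <;> first | rfl | omega
    rw [hee, hdd]
    exact ⟨rfl, rfl⟩

include h0 in
lemma adj_classify (hd : 2 ≤ d) {Q' : Cube d} (h1 : IsFace Q') (h2 : FaceAdj Q Q') :
    ∃ t : Bool ⊕ Bool × Bool, ∃ k : Fin d, k ≠ i₀ ∧ Q' = adjFace Q i₀ t k := by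
  rw [faceAdj_iff] at h2
  obtain ⟨hcompat, hdim⟩ := h2
  obtain ⟨j₀, hj₀⟩ := face_structure (by omega) h1
  have hQi₀ : (Q i₀).2 = false := by
    have := (h0 i₀); simp at this; exact this
  have hQ'j₀ : (Q' j₀).2 = false := by
    have := (hj₀ j₀); simp at this; exact this
  classical
  set S : Finset (Fin d) :=
    Finset.univ.filter (fun i => i ≠ i₀ ∧ i ≠ j₀ ∧ (Q i).1 = (Q' i).1) with hS
  have hScard : S.card = d - 2 := by
    rw [← hdim]
    unfold cdim
    congr 1
    ext i
    rw [Finset.mem_filter, Finset.mem_filter, meet_snd, h0 i, hj₀ i]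
    try tauto
  by_cases hji : j₀ = i₀
  · -- Type A: same degenerate coordinate
    subst hji
    have hsub : S ⊆ Finset.univ.erase j₀ := by
      intro i hi
      rw [hS, Finset.mem_filter] at hi
      exact Finset.mem_erase.2 ⟨hi.2.1, Finset.mem_univ i⟩
    have hTcard : ((Finset.univ.erase j₀) \ S).card = 1 := by
      rw [Finset.card_sdiff_of_subset hsub, card_erase_one j₀ (by omega), hScard]
      omega
    obtain ⟨k, hkk⟩ := Finset.card_eq_one.1 hTcard
    have hkmem : k ∈ (Finset.univ.erase j₀) \ S := hkk ▸ Finset.mem_singleton_self k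
    rw [Finset.mem_sdiff, Finset.mem_erase] at hkmem
    obtain ⟨⟨hkj, -⟩, hknS⟩ := hkmem
    have hkS : ¬((Q k).1 = (Q' k).1) := by
      intro habs
      exact hknS (Finset.mem_filter.2 ⟨Finset.mem_univ k, hkj, hkj, habs⟩)
    have hQk : (Q k).2 = true := (h0 k).2 hkj
    have hQ'k : (Q' k).2 = true := (hj₀ k).2 hkj
    have hck := hcompat k
    have eQk : Q k = ((Q k).1, true) := Prod.ext rfl hQk
    have eQ'k : Q' k = ((Q' k).1, true) := Prod.ext rfl hQ'k
    rw [eQk, eQ'k, Compat_tt] at hck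
    have hrest : ∀ i, i ≠ k → Q' i = Q i := by
      intro i hik
      by_cases hii : i = j₀
      · subst hii
        have hcj := hcompat i
        have e1 : Q i = ((Q i).1, false) := Prod.ext rfl hQi₀
        have e2 : Q' i = ((Q' i).1, false) := Prod.ext rfl hQ'j₀
        rw [e1, e2, Compat_ff] at hcj
        exact Prod.ext hcj.symm (hQ'j₀.trans hQi₀.symm)
      · have hiS : i ∈ S := by
          by_contra hins
          have : i ∈ (Finset.univ.erase j₀) \ S :=
            Finset.mem_sdiff.2 ⟨Finset.mem_erase.2 ⟨hii, Finset.mem_univ i⟩, hins⟩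
          rw [hkk, Finset.mem_singleton] at this
          exact hik this
        rw [hS, Finset.mem_filter] at hiS
        exact Prod.ext hiS.2.2.2.symm (((hj₀ i).2 hii).trans ((h0 i).2 hii).symm)
    rcases hck with habs | hc1 | hc2
    · exact absurd habs hkS
    · -- (Q k).1 = (Q' k).1 + 1 : shift by -1
      refine ⟨Sum.inl false, k, hkj, ?_⟩
      funext i
      by_cases hik : i = k
      · subst hik
        rw [adjFace_inl_self]
        refine Prod.ext ?_ hQ'k
        simp only [Bool.false_eq_true, if_false]
        omega
      · rw [adjFace_inl_ne Q j₀ false hik]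
        exact hrest i hik
    · -- (Q' k).1 = (Q k).1 + 1 : shift by +1
      refine ⟨Sum.inl true, k, hkj, ?_⟩
      funext i
      by_cases hik : i = k
      · subst hik
        rw [adjFace_inl_self]
        refine Prod.ext ?_ hQ'k
        simp only [if_true]
        omega
      · rw [adjFace_inl_ne Q j₀ true hik]
        exact hrest i hik
  · -- Type B: different degenerate coordinate j₀ ≠ i₀
    have hsub : S ⊆ (Finset.univ.erase i₀).erase j₀ := by
      intro i hi
      rw [hS, Finset.mem_filter] at hi
      exact Finset.mem_erase.2 ⟨hi.2.2.1, Finset.mem_erase.2 ⟨hi.2.1, Finset.mem_univ i⟩⟩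
    have hSeq : S = (Finset.univ.erase i₀).erase j₀ := by
      apply Finset.eq_of_subset_of_card_le hsub
      rw [card_erase_two i₀ hji hd, hScard]
    have hci := hcompat i₀
    have hQ'i₀ : (Q' i₀).2 = true := (hj₀ i₀).2 (fun h => hji h.symm)
    have e1 : Q i₀ = ((Q i₀).1, false) := Prod.ext rfl hQi₀
    have e2 : Q' i₀ = ((Q' i₀).1, true) := Prod.ext rfl hQ'i₀
    rw [e1, e2, Compat_ft] at hci
    have hcj := hcompat j₀
    have hQj₀ : (Q j₀).2 = true := (h0 j₀).2 hji
    have e3 : Q j₀ = ((Q j₀).1, true) := Prod.ext rfl hQj₀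
    have e4 : Q' j₀ = ((Q' j₀).1, false) := Prod.ext rfl hQ'j₀
    rw [e3, e4, Compat_tf] at hcj
    refine ⟨Sum.inr (if (Q i₀).1 = (Q' i₀).1 then false else true,
      if (Q' j₀).1 = (Q j₀).1 then false else true), j₀, hji, ?_⟩
    funext i
    by_cases hii : i = i₀
    · subst hii
      rw [adjFace_inr_i₀]
      refine Prod.ext ?_ hQ'i₀
      simp only
      by_cases hcase : (Q i).1 = (Q' i).1
      · simp [hcase]
      · rcases hci with h | h
        · exact absurd h hcase
        · simp [hcase]
          omega
    · by_cases hij : i = j₀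
      · subst hij
        rw [adjFace_inr_self Q i₀ _ _ hji]
        refine Prod.ext ?_ hQ'j₀
        simp only
        by_cases hcase : (Q' i).1 = (Q i).1
        · simp [hcase]
        · rcases hcj with h | h
          · exact absurd h hcase
          · simp [hcase]
            omega
      · rw [adjFace_inr_ne Q i₀ _ _ hii hij]
        have hiS : i ∈ S := by
          rw [hSeq]
          exact Finset.mem_erase.2 ⟨hij, Finset.mem_erase.2 ⟨hii, Finset.mem_univ i⟩⟩
        rw [hS, Finset.mem_filter] at hiS
        exact Prod.ext hiS.2.2.2.symm (((hj₀ i).2 hij).trans ((h0 i).2 hii).symm)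

end Fixed

/-- For `d ≥ 2`, the number of faces adjacent to a fixed face `Q`
in `ℝ^d` is exactly `6(d-1)`. -/
theorem face_adjacent_count {d : ℕ} (hd : 2 ≤ d) (Q : Cube d) (hQ : IsFace Q) :
    Nat.card {Q' : Cube d // IsFace Q' ∧ FaceAdj Q Q'} = 6 * (d - 1) := by
  classical
  obtain ⟨i₀, h0⟩ := face_structure (by omega) hQ
  let g : ((Bool ⊕ Bool × Bool) × {k : Fin d // k ≠ i₀}) →
      {Q' : Cube d // IsFace Q' ∧ FaceAdj Q Q'} :=
    fun p => ⟨adjFace Q i₀ p.1 p.2.1,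
      adjFace_isFace Q i₀ h0 hd p.1 p.2.2, adjFace_adj Q i₀ h0 hd p.1 p.2.2⟩
  have hbij : Function.Bijective g := by
    constructor
    · rintro ⟨t, k, hk⟩ ⟨t', k', hk'⟩ hgg
      have heq : adjFace Q i₀ t k = adjFace Q i₀ t' k' := congrArg Subtype.val hgg
      obtain ⟨ht, hkk⟩ := adjFace_injective Q i₀ h0 hk hk' heq
      simp only [Prod.mk.injEq, Subtype.mk.injEq]
      exact ⟨ht, hkk⟩
    · rintro ⟨Q', h1, h2⟩
      obtain ⟨t, k, hk, hQ'⟩ := adj_classify Q i₀ h0 hd h1 h2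
      exact ⟨⟨t, k, hk⟩, Subtype.ext hQ'.symm⟩
  have hcongr := Nat.card_congr (Equiv.ofBijective g hbij)
  rw [← hcongr]
  rw [Nat.card_eq_fintype_card, Fintype.card_prod, Fintype.card_sum, Fintype.card_bool,
    Fintype.card_prod, Fintype.card_bool]
  have hsub : Fintype.card {k : Fin d // k ≠ i₀} = d - 1 := by
    rw [Fintype.card_subtype_compl, Fintype.card_fin, Fintype.card_subtype_eq]
  rw [hsub]

end
end HP
end

section
/- For face percolation in ℝ^d with d ≥ 2, the critical probability satisfies p_c^face(d) ≥ 1/(6d−7). That is, if p < 1/(6d−7), then the probability that the open face cluster containing the fixed face Q₀ = [0,0] × [0,1]^{d−1} is infinite equals 0. -/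
open MeasureTheory Set Relation Filter

namespace HP

noncomputable section

/-
Face percolation is site percolation on the graph of faces under adjacency. A face that is
degenerate in coordinate `i` is adjacent to exactly `6(d-1)` faces: for each other coordinate
`j`, two parallel faces shifted by one in `j` and four perpendicular faces degenerate in `j`.
An infinite open cluster of `Q₀` contains, for every `n`, an open self-avoiding path of `n+1`
steps starting at `Q₀`. Such a path is non-backtracking, so there are at most
`(6d-6)(6d-7)^n` of them, each open with probability `p^(n+2)`; this bound tends to `0` when
`(6d-7)p < 1`.
-/

lemma IsBernoulliProduct.measure_forall_eq_true {I : Type*} {p : ℝ} {μ : Measure (I → Bool)}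
    (hμ : IsBernoulliProduct p μ) {l : List I} (hl : l.Nodup) :
    μ {ω | ∀ x ∈ l, ω x = true} = ENNReal.ofReal p ^ l.length := by
  classical
  simpa [List.toFinset_card_of_nodup hl] using hμ.2 l.toFinset fun _ => true

end
end HP

namespace SimpleGraph

open HP Finset

variable {V : Type*} (G : SimpleGraph V)

def openCluster (ω : V → Bool) (v : V) : Set V :=
  {w | ω v = true ∧ ω w = true ∧
    ReflTransGen (fun a b => G.Adj a b ∧ ω a = true ∧ ω b = true) v w}

section NonBacktracking

variable [G.LocallyFinite] [DecidableEq V]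

/- Walks are lists with the newest vertex first; the next vertex may not be the previous one. -/
def nonBacktrackingSteps : List V → Finset V
  | [] => ∅
  | [b] => G.neighborFinset b
  | b :: a :: _ => (G.neighborFinset b).erase a

def nonBacktrackingWalks (v : V) : ℕ → Finset (List V)
  | 0 => {[v]}
  | n + 1 => (nonBacktrackingWalks v n).biUnion fun l =>
      (G.nonBacktrackingSteps l).image (· :: l)

variable {G}

lemma mem_nonBacktrackingWalks_succ {v : V} {n : ℕ} {l : List V} :
    l ∈ G.nonBacktrackingWalks v (n + 1) ↔
      ∃ l' ∈ G.nonBacktrackingWalks v n, ∃ b ∈ G.nonBacktrackingSteps l', b :: l' = l := by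
  simp [nonBacktrackingWalks]

lemma length_of_mem_nonBacktrackingWalks {v : V} :
    ∀ {n : ℕ} {l : List V}, l ∈ G.nonBacktrackingWalks v n → l.length = n + 1
  | 0, l, h => by simp_all [nonBacktrackingWalks]
  | n + 1, _, h => by
    obtain ⟨l', hl', b, -, rfl⟩ := mem_nonBacktrackingWalks_succ.1 h
    simp [length_of_mem_nonBacktrackingWalks hl']

lemma drop_mem_nonBacktrackingWalks {v : V} :
    ∀ {n k : ℕ} {l : List V}, l ∈ G.nonBacktrackingWalks v (n + k) →
      l.drop k ∈ G.nonBacktrackingWalks v n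
  | _, 0, _, h => h
  | _, k + 1, _, h => by
    obtain ⟨l', hl', b, -, rfl⟩ := mem_nonBacktrackingWalks_succ.1 h
    rw [List.drop_succ_cons]
    exact drop_mem_nonBacktrackingWalks hl'

lemma cons_mem_nonBacktrackingWalks {v b c : V} {n : ℕ} {l : List V}
    (hl : l ∈ G.nonBacktrackingWalks v n) (hb : l.head? = some b) (hbc : G.Adj b c)
    (hc : c ∉ l) : c :: l ∈ G.nonBacktrackingWalks v (n + 1) := by
  refine mem_nonBacktrackingWalks_succ.2 ⟨l, hl, c, ?_, rfl⟩
  match l, hb with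
  | [_], rfl => simpa [nonBacktrackingSteps] using hbc
  | _ :: a :: _, rfl =>
    simp only [nonBacktrackingSteps, mem_erase, mem_neighborFinset]
    exact ⟨fun hca => hc (hca ▸ by simp), hbc⟩

lemma adj_of_mem_nonBacktrackingSteps {a b : V} {t : List V}
    (h : b ∈ G.nonBacktrackingSteps (a :: t)) : G.Adj a b := by
  cases t <;> simp_all [nonBacktrackingSteps]

lemma card_nonBacktrackingSteps_le {Δ : ℕ} (hΔ : ∀ v, G.degree v ≤ Δ + 1) {v : V} {n : ℕ}
    {l : List V} (hl : l ∈ G.nonBacktrackingWalks v (n + 1)) :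
    (G.nonBacktrackingSteps l).card ≤ Δ := by
  obtain ⟨l', -, b, hb, rfl⟩ := mem_nonBacktrackingWalks_succ.1 hl
  match l', hb with
  | a :: _, hb =>
    rw [nonBacktrackingSteps, card_erase_of_mem
      ((G.mem_neighborFinset b a).2 (adj_of_mem_nonBacktrackingSteps hb).symm),
      card_neighborFinset_eq_degree]
    have := hΔ b
    omega

lemma card_nonBacktrackingWalks_le {Δ : ℕ} (hΔ : ∀ v, G.degree v ≤ Δ + 1) (v : V) :
    ∀ n, (G.nonBacktrackingWalks v (n + 1)).card ≤ (Δ + 1) * Δ ^ n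
  | 0 => by
    simpa [nonBacktrackingWalks, nonBacktrackingSteps, card_neighborFinset_eq_degree] using
      card_image_le.trans (hΔ v)
  | n + 1 =>
    calc (G.nonBacktrackingWalks v (n + 2)).card
        ≤ (G.nonBacktrackingWalks v (n + 1)).card * Δ :=
          card_biUnion_le_card_mul _ _ _ fun _ hl =>
            card_image_le.trans (card_nonBacktrackingSteps_le hΔ hl)
      _ ≤ (Δ + 1) * Δ ^ n * Δ := Nat.mul_le_mul_right _ (card_nonBacktrackingWalks_le hΔ v n)
      _ = (Δ + 1) * Δ ^ (n + 1) := by ring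

/- Erasing the loop that a repeated vertex closes keeps the walk self-avoiding. -/
lemma exists_nodup_walk_of_reflTransGen {ω : V → Bool} {v w : V} (hv : ω v = true)
    (h : ReflTransGen (fun a b => G.Adj a b ∧ ω a = true ∧ ω b = true) v w) :
    ∃ n, ∃ l ∈ G.nonBacktrackingWalks v n,
      l.head? = some w ∧ l.Nodup ∧ ∀ x ∈ l, ω x = true := by
  induction h with
  | refl => exact ⟨0, [v], by simp [nonBacktrackingWalks], rfl, by simp, by simpa⟩
  | @tail b c _ hbc ih =>
    obtain ⟨n, l, hl, hb, hnd, hopen⟩ := ih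
    by_cases hc : c ∈ l
    · obtain ⟨s, t, rfl⟩ := List.append_of_mem hc
      have hlen := length_of_mem_nonBacktrackingWalks hl
      simp only [List.length_append, List.length_cons] at hlen
      refine ⟨n - s.length, (s ++ c :: t).drop s.length, ?_, by simp,
        hnd.sublist (List.drop_sublist _ _), fun x hx => hopen x (List.mem_of_mem_drop hx)⟩
      exact drop_mem_nonBacktrackingWalks (by rwa [Nat.sub_add_cancel (by omega)])
    · exact ⟨n + 1, c :: l, cons_mem_nonBacktrackingWalks hl hb hbc.1 hc, rfl,
        List.nodup_cons.2 ⟨hc, hnd⟩, by simpa [hbc.2.2] using hopen⟩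

lemma exists_open_nodup_walk_of_openCluster_infinite {ω : V → Bool} {v : V}
    (h : (G.openCluster ω v).Infinite) (n : ℕ) :
    ∃ l ∈ G.nonBacktrackingWalks v n, l.Nodup ∧ ∀ x ∈ l, ω x = true := by
  by_contra! hno
  refine h (((range n).biUnion fun m =>
    (G.nonBacktrackingWalks v m).biUnion List.toFinset).finite_toSet.subset ?_)
  rintro w ⟨hv, -, hvw⟩
  obtain ⟨m, l, hl, hw, hnd, hopen⟩ := exists_nodup_walk_of_reflTransGen hv hvw
  have hm : m < n := by
    by_contra! hm
    obtain ⟨k, rfl⟩ := Nat.exists_eq_add_of_le hm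
    obtain ⟨x, hx, hωx⟩ := hno _ (drop_mem_nonBacktrackingWalks hl)
      (hnd.sublist (List.drop_sublist _ _))
    exact hωx (hopen x (List.mem_of_mem_drop hx))
  simp only [coe_biUnion, coe_range, Set.mem_Iio, List.coe_toFinset, Set.mem_iUnion]
  exact ⟨m, hm, l, hl, List.mem_of_mem_head? hw⟩

end NonBacktracking

theorem measure_openCluster_infinite_eq_zero [G.LocallyFinite] {Δ : ℕ}
    (hΔ : ∀ v, G.degree v ≤ Δ + 1) {p : ℝ} (hp : Δ * p < 1) {μ : Measure (V → Bool)}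
    (hμ : IsBernoulliProduct p μ) (v : V) :
    μ {ω | (G.openCluster ω v).Infinite} = 0 := by
  classical
  set q := ENNReal.ofReal p
  have hbound (n : ℕ) :
      μ {ω | (G.openCluster ω v).Infinite} ≤ (Δ + 1) * q ^ 2 * (Δ * q) ^ n := by
    set P := (G.nonBacktrackingWalks v (n + 1)).filter List.Nodup
    calc μ {ω | (G.openCluster ω v).Infinite}
        ≤ μ (⋃ l ∈ P, {ω | ∀ x ∈ l, ω x = true}) := measure_mono fun ω hω => by
          obtain ⟨l, hl, hnd, hopen⟩ :=
            exists_open_nodup_walk_of_openCluster_infinite hω (n + 1)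
          exact Set.mem_biUnion (mem_filter.2 ⟨hl, hnd⟩) hopen
      _ ≤ ∑ l ∈ P, μ {ω | ∀ x ∈ l, ω x = true} := measure_biUnion_finset_le _ _
      _ = P.card * q ^ (n + 2) := by
          rw [sum_congr rfl fun l hl => ?_, sum_const, nsmul_eq_mul]
          obtain ⟨hl, hnd⟩ := mem_filter.1 hl
          rw [hμ.measure_forall_eq_true hnd, length_of_mem_nonBacktrackingWalks hl]
      _ ≤ ((Δ + 1) * Δ ^ n : ℕ) * q ^ (n + 2) := by
          gcongr
          exact (card_filter_le _ _).trans (card_nonBacktrackingWalks_le hΔ v n)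
      _ = (Δ + 1) * q ^ 2 * (Δ * q) ^ n := by push_cast; ring
  have hr : (Δ : ENNReal) * q < 1 := by
    rw [← ENNReal.ofReal_natCast, ← ENNReal.ofReal_mul (Nat.cast_nonneg _)]
    exact ENNReal.ofReal_lt_one.2 hp
  have hlim : Tendsto (fun n : ℕ => (Δ + 1) * q ^ 2 * (Δ * q) ^ n) atTop (nhds 0) := by
    simpa using ENNReal.Tendsto.const_mul (ENNReal.tendsto_pow_atTop_nhds_zero_of_lt_one hr)
      (Or.inr (by finiteness))
  exact le_zero_iff.1 (ge_of_tendsto' hlim hbound)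

end SimpleGraph

namespace HP

open Finset

variable {d : ℕ}

lemma bounds_of_mem_intervalSet {x : ℝ} {l : ℤ} {b : Bool} (h : x ∈ intervalSet l b) :
    (l : ℝ) ≤ x ∧ x ≤ l + 1 ∧ (b = false → x = l) := by
  cases b <;> simp_all [intervalSet]

lemma int_bounds_of_mem_intervalSet {x : ℝ} {l m : ℤ} {b e : Bool}
    (hl : x ∈ intervalSet l b) (hm : x ∈ intervalSet m e) :
    l ≤ m + 1 ∧ m ≤ l + 1 ∧ (b = false → m ≤ l) ∧ (e = false → l ≤ m) := by
  obtain ⟨hl₁, hl₂, hl₃⟩ := bounds_of_mem_intervalSet hl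
  obtain ⟨hm₁, hm₂, hm₃⟩ := bounds_of_mem_intervalSet hm
  refine ⟨?_, ?_, fun hb => ?_, fun he => ?_⟩
  · exact_mod_cast (by linarith : (l : ℝ) ≤ m + 1)
  · exact_mod_cast (by linarith : (m : ℝ) ≤ l + 1)
  · exact_mod_cast (by linarith [hl₃ hb] : (m : ℝ) ≤ l)
  · exact_mod_cast (by linarith [hm₃ he] : (l : ℝ) ≤ m)

lemma eq_true_and_eq_of_mem_intervalSet {n l : ℤ} {b : Bool}
    (h₀ : (n : ℝ) ∈ intervalSet l b) (h₁ : (n : ℝ) + 1 ∈ intervalSet l b) :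
    b = true ∧ l = n := by
  obtain ⟨hl, -, hb₀⟩ := bounds_of_mem_intervalSet h₀
  obtain ⟨-, hn, hb₁⟩ := bounds_of_mem_intervalSet h₁
  refine ⟨?_, ?_⟩
  · by_contra hb
    linarith [hb₀ (by simpa using hb), hb₁ (by simpa using hb)]
  · exact_mod_cast le_antisymm hl (by linarith)

lemma intervalSet_inter_eq_true_iff {l m n : ℤ} {b e f : Bool}
    (h : intervalSet l b ∩ intervalSet m e = intervalSet n f) :
    f = true ↔ b = true ∧ e = true ∧ l = m := by
  constructor
  · rintro rfl
    have h₀ : (n : ℝ) ∈ intervalSet l b ∩ intervalSet m e := by rw [h]; simp [intervalSet]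
    have h₁ : (n : ℝ) + 1 ∈ intervalSet l b ∩ intervalSet m e := by
      rw [h]; simp [intervalSet]
    obtain ⟨hb, rfl⟩ := eq_true_and_eq_of_mem_intervalSet h₀.1 h₁.1
    obtain ⟨he, rfl⟩ := eq_true_and_eq_of_mem_intervalSet h₀.2 h₁.2
    exact ⟨hb, he, rfl⟩
  · rintro ⟨rfl, rfl, rfl⟩
    rw [Set.inter_self] at h
    have h₀ : (l : ℝ) ∈ intervalSet n f := by rw [← h]; simp [intervalSet]
    have h₁ : (l : ℝ) + 1 ∈ intervalSet n f := by rw [← h]; simp [intervalSet]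
    exact (eq_true_and_eq_of_mem_intervalSet h₀ h₁).1

lemma corner_mem_cubeSet (c : Cube d) : (fun i => ((c i).1 : ℝ)) ∈ cubeSet c := fun i => by
  cases (c i).2 <;> simp [intervalSet]

lemma intervalSet_inter_eq_of_cubeSet_inter_eq {A B C : Cube d}
    (h : cubeSet A ∩ cubeSet B = cubeSet C) (i : Fin d) :
    intervalSet (A i).1 (A i).2 ∩ intervalSet (B i).1 (B i).2
      = intervalSet (C i).1 (C i).2 := by
  set x := fun j => ((C j).1 : ℝ)
  have hx : x ∈ cubeSet A ∩ cubeSet B := h ▸ corner_mem_cubeSet C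
  ext t
  constructor
  · rintro ⟨htA, htB⟩
    have : Function.update x i t ∈ cubeSet A ∩ cubeSet B := by
      constructor <;> intro k <;> rcases eq_or_ne k i with rfl | hk
      · simpa using htA
      · simpa [Function.update_of_ne hk] using hx.1 k
      · simpa using htB
      · simpa [Function.update_of_ne hk] using hx.2 k
    rw [h] at this
    simpa using this i
  · intro ht
    have : Function.update x i t ∈ cubeSet C := by
      intro k
      rcases eq_or_ne k i with rfl | hk
      · simpa using ht
      · simpa [Function.update_of_ne hk] using corner_mem_cubeSet C k
    rw [← h] at this
    exact ⟨by simpa using this.1 i, by simpa using this.2 i⟩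

lemma snd_eq_true_iff_of_cubeSet_inter_eq {A B C : Cube d}
    (h : cubeSet A ∩ cubeSet B = cubeSet C) (k : Fin d) :
    (C k).2 = true ↔ (A k).2 = true ∧ A k = B k := by
  rw [intervalSet_inter_eq_true_iff (intervalSet_inter_eq_of_cubeSet_inter_eq h k), Prod.ext_iff]
  constructor
  · rintro ⟨hA, hB, h₁⟩
    exact ⟨hA, h₁, hA.trans hB.symm⟩
  · rintro ⟨hA, h₁, h₂⟩
    exact ⟨hA, h₂ ▸ hA, h₁⟩

lemma IsFace.card_filter_snd_eq_false (hd : 1 ≤ d) {A : Cube d} (hA : IsFace A) :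
    (univ.filter fun k => (A k).2 = false).card = 1 := by
  have := card_filter_add_card_filter_not (s := univ) (fun k => (A k).2 = true)
  simp only [Bool.not_eq_true, card_univ, Fintype.card_fin] at this
  unfold IsFace cdim at hA
  omega

lemma IsFace.exists_snd_eq_false_iff (hd : 1 ≤ d) {A : Cube d} (hA : IsFace A) :
    ∃ i, ∀ k, (A k).2 = false ↔ k = i := by
  obtain ⟨i, hi⟩ := card_eq_one.1 (hA.card_filter_snd_eq_false hd)
  exact ⟨i, fun k => by simpa using congr(k ∈ $hi)⟩

lemma faceAdj_comm {A B : Cube d} (h : FaceAdj A B) : FaceAdj B A := by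
  obtain ⟨C, hC, hABC⟩ := h
  exact ⟨C, hC, Set.inter_comm _ _ ▸ hABC⟩

lemma not_faceAdj_self (hd : 2 ≤ d) {A : Cube d} (hA : IsFace A) : ¬FaceAdj A A := by
  rintro ⟨C, hC, hAC⟩
  have : cdim C = cdim A := by
    unfold cdim
    congr 1
    ext k
    simp [snd_eq_true_iff_of_cubeSet_inter_eq hAC k]
  unfold IsFace at hA
  omega

/- With `A` degenerate in coordinate `i`, an adjacent face either stays degenerate in `i` and
moves one step in a coordinate `j`, or becomes degenerate in `j` and spans one of the two unit
intervals at `l` in coordinate `i`. -/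
def pairMoves (l a : ℤ) : Finset ((ℤ × Bool) × (ℤ × Bool)) :=
  {((l, false), (a - 1, true)), ((l, false), (a + 1, true)),
    ((l - 1, true), (a, false)), ((l - 1, true), (a + 1, false)),
    ((l, true), (a, false)), ((l, true), (a + 1, false))}

def faceCandidates (A : Cube d) : Finset (Cube d) :=
  ((univ.filter fun i => (A i).2 = false) ×ˢ (univ.filter fun j => (A j).2 = true)).biUnion
    fun ij => (pairMoves (A ij.1).1 (A ij.2).1).image
      fun xy => Function.update (Function.update A ij.1 xy.1) ij.2 xy.2

lemma card_faceCandidates_le (hd : 1 ≤ d) {A : Cube d} (hA : IsFace A) :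
    (faceCandidates A).card ≤ 6 * d - 6 :=
  calc (faceCandidates A).card
      ≤ ((univ.filter fun i => (A i).2 = false) ×ˢ
          (univ.filter fun j => (A j).2 = true)).card * 6 :=
        card_biUnion_le_card_mul _ _ _ fun _ _ => card_image_le.trans card_le_six
    _ = 6 * d - 6 := by
        rw [card_product, hA.card_filter_snd_eq_false hd]
        unfold IsFace cdim at hA
        omega

lemma mem_pairMoves {u v x y : ℤ × Bool} {s t : ℝ} (hu : u.2 = false) (hv : v.2 = true)
    (hs : s ∈ intervalSet u.1 u.2 ∩ intervalSet x.1 x.2)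
    (ht : t ∈ intervalSet v.1 v.2 ∩ intervalSet y.1 y.2)
    (hxy : x.2 = !y.2) (hvy : y.2 = true → y.1 ≠ v.1) : (x, y) ∈ pairMoves u.1 v.1 := by
  obtain ⟨l, _⟩ := u
  obtain ⟨a, _⟩ := v
  obtain ⟨m, e⟩ := x
  obtain ⟨b, f⟩ := y
  subst hu hv hxy
  have hl := int_bounds_of_mem_intervalSet hs.1 hs.2
  have ha := int_bounds_of_mem_intervalSet ht.1 ht.2
  cases f <;> simp_all [pairMoves] <;> omega

/- The `d - 2` nondegenerate coordinates of `A ∩ B` are nondegenerate coordinates of `A` shared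
with `B`; all but one of the `d - 1` nondegenerate coordinates of `A` are therefore shared. -/
lemma exists_unshared_of_cubeSet_inter_eq (hd : 2 ≤ d) {A B C : Cube d} (hA : IsFace A)
    (hC : cdim C = d - 2) (h : cubeSet A ∩ cubeSet B = cubeSet C) :
    ∃ j, (A j).2 = true ∧ A j ≠ B j ∧ ∀ k, (A k).2 = true → k ≠ j → B k = A k := by
  have hshared := snd_eq_true_iff_of_cubeSet_inter_eq h
  have hsub : (univ.filter fun k => (C k).2 = true) ⊆ univ.filter fun k => (A k).2 = true :=
    fun k hk => by
      simp only [mem_filter, Finset.mem_univ, true_and, hshared] at hk ⊢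
      exact hk.1
  obtain ⟨j, hj⟩ := card_eq_one.1 (by
    rw [card_sdiff_of_subset hsub]
    unfold IsFace cdim at hA
    unfold cdim at hC
    omega)
  have hj' (k : Fin d) : (A k).2 = true ∧ ¬(C k).2 = true ↔ k = j := by
    simpa using congr(k ∈ $hj)
  obtain ⟨hAj, hCj⟩ := (hj' j).2 rfl
  refine ⟨j, hAj, fun hAB => hCj ((hshared j).2 ⟨hAj, hAB⟩), fun k hAk hkj => ?_⟩
  exact (((hshared k).1 (by simpa [hAk, hkj] using hj' k)).2).symm

lemma mem_faceCandidates_of_faceAdj (hd : 2 ≤ d) {A B : Cube d} (hA : IsFace A)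
    (hB : IsFace B) (h : FaceAdj A B) : B ∈ faceCandidates A := by
  obtain ⟨C, hC, hABC⟩ := h
  have hcorner : (fun k => ((C k).1 : ℝ)) ∈ cubeSet A ∩ cubeSet B :=
    hABC ▸ corner_mem_cubeSet C
  obtain ⟨i, hAi⟩ := hA.exists_snd_eq_false_iff (by omega)
  obtain ⟨i', hBi'⟩ := hB.exists_snd_eq_false_iff (by omega)
  obtain ⟨j, hAj, hABj, hshared⟩ := exists_unshared_of_cubeSet_inter_eq hd hA hC hABC
  have hij : i ≠ j := fun h => by simp [(hAi j).2 h.symm] at hAj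
  have hother (k : Fin d) (hki : k ≠ i) (hkj : k ≠ j) : B k = A k :=
    hshared k (Bool.eq_true_of_not_eq_false ((hAi k).not.2 hki)) hkj
  have hi'ij : i' = i ∨ i' = j := by
    by_contra! hne
    have := (hBi' i').2 rfl
    rw [hother i' hne.1 hne.2, hAi] at this
    exact hne.1 this
  have hBeq : B = Function.update (Function.update A i (B i)) j (B j) := by
    funext k
    by_cases hkj : k = j
    · simp [hkj]
    by_cases hki : k = i
    · simp [hki, hij]
    simp [hkj, hki, hother k hki hkj]
  rw [hBeq]
  refine mem_biUnion.2
    ⟨(i, j), by simp [(hAi i).2 rfl, hAj], mem_image.2 ⟨(B i, B j), ?_, rfl⟩⟩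
  refine mem_pairMoves ((hAi i).2 rfl) hAj ⟨hcorner.1 i, hcorner.2 i⟩
    ⟨hcorner.1 j, hcorner.2 j⟩ ?_ fun hBj hBA => hABj (Prod.ext hBA.symm (hAj.trans hBj.symm))
  rcases hi'ij with rfl | rfl
  · simp [(hBi' i').2 rfl, (hBi' j).not.2 hij.symm]
  · simp [(hBi' i').2 rfl, (hBi' i).not.2 hij]

def faceGraph (hd : 2 ≤ d) : SimpleGraph (Face d) where
  Adj A B := FaceAdj A.1 B.1
  symm := ⟨fun _ _ => faceAdj_comm⟩
  loopless := ⟨fun A => not_faceAdj_self hd A.2⟩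

open Classical in
noncomputable def faceNeighbors (A : Face d) : Finset (Face d) :=
  ((faceCandidates A.1).subtype IsFace).filter fun B => FaceAdj A.1 B.1

lemma mem_faceNeighbors (hd : 2 ≤ d) {A B : Face d} :
    B ∈ faceNeighbors A ↔ (faceGraph hd).Adj A B := by
  simpa [faceNeighbors, faceGraph] using mem_faceCandidates_of_faceAdj hd A.2 B.2

noncomputable instance (hd : 2 ≤ d) : (faceGraph hd).LocallyFinite :=
  fun A => Fintype.ofFinset (faceNeighbors A) fun _ => mem_faceNeighbors hd

lemma faceGraph_degree_le (hd : 2 ≤ d) (A : Face d) : (faceGraph hd).degree A ≤ 6 * d - 6 := by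
  classical
  rw [← SimpleGraph.card_neighborFinset_eq_degree, SimpleGraph.neighborFinset,
    Set.toFinset_ofFinset (p := (faceGraph hd).neighborSet A) _ fun _ => mem_faceNeighbors hd]
  calc (faceNeighbors A).card ≤ ((faceCandidates A.1).subtype IsFace).card := card_filter_le _ _
    _ ≤ (faceCandidates A.1).card := (card_subtype _ _).trans_le (card_filter_le _ _)
    _ ≤ 6 * d - 6 := card_faceCandidates_le (by omega) A.2

theorem face_percolation_subcritical_general {d : ℕ} (hd : 2 ≤ d) (p : ℝ)
    (hp : p < 1 / (6 * (d : ℝ) - 7))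
    (μ : Measure (Face d → Bool)) (hμ : IsBernoulliProduct p μ)
    (Q : Face d) :
    μ {ω | (faceCluster ω Q).Infinite} = 0 := by
  have hdeg (A : Face d) : (faceGraph hd).degree A ≤ (6 * d - 7) + 1 :=
    (faceGraph_degree_le hd A).trans (by omega)
  have hp' : ((6 * d - 7 : ℕ) : ℝ) * p < 1 := by
    have hd' : (2 : ℝ) ≤ d := by exact_mod_cast hd
    rw [lt_div_iff₀ (by linarith)] at hp
    push_cast [Nat.cast_sub (by omega : 7 ≤ 6 * d)]
    linarith
  exact (faceGraph hd).measure_openCluster_infinite_eq_zero hdeg hp' hμ Q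

/-- in face percolation in `ℝ^d` (`d ≥ 2`) with parameter
`p < 1/(6d-7)`, the open cluster of the face `Q₀` is almost surely finite;
hence `p_c^face(d) ≥ 1/(6d-7)`. -/
theorem face_percolation_subcritical {d : ℕ} (hd : 2 ≤ d) (p : ℝ) (hp0 : 0 ≤ p)
    (hp : p < 1 / (6 * (d : ℝ) - 7))
    (μ : Measure (Face d → Bool)) (hμ : IsBernoulliProduct p μ)
    (Q : Face d) (hQ : Q.1 = Q0 d) :
    μ {ω | (faceCluster ω Q).Infinite} = 0 :=
  face_percolation_subcritical_general hd p hp μ hμ Q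

end HP
end

section
/- Let C* be a connected cluster of dual vertices in the dual lattice (ℤ^d)* = ℤ^d + (1/2,…,1/2). For each dual vertex x* define the occupied cell B_{x*} = ∏_{i=1}^d [(x*)_i − 1/2, (x*)_i + 1/2] ⊂ ℝ^d, and let B_{C*} = ⋃_{x* ∈ C*} B_{x*}. For each boundary edge e* = ⟨x*, y*⟩ of C* (i.e., exactly one endpoint lies in C*), let Q_{e*} = B_{x*} ∩ B_{y*}, a unit cube of dimension d−1. Then the topological boundary of B_{C*} in ℝ^d equals the union ⋃_{e* ∈ ΔC*} Q_{e*} over all boundary edges e* of C*. -/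
open MeasureTheory Set Relation Filter

namespace HP

noncomputable section

private lemma coord_eps (t : ℝ) :
    ∃ ε > (0:ℝ), ∀ (l : ℤ) (s : ℝ), |s - t| < ε → (l:ℝ) ≤ s → s ≤ (l:ℝ) + 1 →
      (l:ℝ) ≤ t ∧ t ≤ (l:ℝ) + 1 := by
  by_cases h : ∃ m : ℤ, (m : ℝ) = t
  · obtain ⟨m, rfl⟩ := h
    refine ⟨1/2, by norm_num, fun l s hs h1 h2 => ?_⟩
    rw [abs_lt] at hs
    have hl : (l:ℝ) < (m:ℝ) + 1 := by linarith
    have hl2 : (m:ℝ) < (l:ℝ) + 1 + 1 := by linarith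
    have i1 : l ≤ m := by
      have : l < m + 1 := by exact_mod_cast hl
      omega
    have i2 : m ≤ l + 1 := by
      have : m < l + 1 + 1 := by exact_mod_cast hl2
      omega
    exact ⟨by exact_mod_cast i1, by exact_mod_cast i2⟩
  · have hfr : (⌊t⌋:ℝ) < t :=
      lt_of_le_of_ne (Int.floor_le t) (fun he => h ⟨⌊t⌋, he⟩)
    have hfr2 : t < (⌊t⌋:ℝ) + 1 := Int.lt_floor_add_one t
    refine ⟨min (t - ⌊t⌋) ((⌊t⌋:ℝ) + 1 - t), lt_min (by linarith) (by linarith),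
      fun l s hs h1 h2 => ?_⟩
    rw [abs_lt] at hs
    have e1 : min (t - ⌊t⌋) ((⌊t⌋:ℝ) + 1 - t) ≤ t - ⌊t⌋ := min_le_left _ _
    have e2 : min (t - ⌊t⌋) ((⌊t⌋:ℝ) + 1 - t) ≤ (⌊t⌋:ℝ) + 1 - t := min_le_right _ _
    have hl : (l:ℝ) < (⌊t⌋:ℝ) + 1 := by linarith
    have hl2 : (⌊t⌋:ℝ) < (l:ℝ) + 1 := by linarith
    have i1 : l ≤ ⌊t⌋ := by
      have : l < ⌊t⌋ + 1 := by exact_mod_cast hl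
      omega
    have i2 : ⌊t⌋ ≤ l := by
      have : ⌊t⌋ < l + 1 := by exact_mod_cast hl2
      omega
    constructor
    · calc (l:ℝ) ≤ (⌊t⌋:ℝ) := by exact_mod_cast i1
        _ ≤ t := Int.floor_le t
    · have : (⌊t⌋:ℝ) ≤ (l:ℝ) := by exact_mod_cast i2
      linarith

private lemma glob_eps {d : ℕ} (hd : 1 ≤ d) (p : Fin d → ℝ) :
    ∃ ε > (0:ℝ), ∀ (z : Fin d → ℤ) (q : Fin d → ℝ),
      dist q p < ε → q ∈ cell z → p ∈ cell z := by
  haveI : Nonempty (Fin d) := Fin.pos_iff_nonempty.mp hd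
  choose εf hεf hprop using fun i => coord_eps (p i)
  refine ⟨Finset.univ.inf' Finset.univ_nonempty εf, ?_, fun z q hq hzq => ?_⟩
  · exact (Finset.lt_inf'_iff _).mpr fun i _ => hεf i
  · intro i
    have h1 : dist (q i) (p i) < εf i :=
      lt_of_le_of_lt (dist_le_pi_dist q p i)
        (lt_of_lt_of_le hq (Finset.inf'_le _ (Finset.mem_univ i)))
    rw [Real.dist_eq] at h1
    have hz := hzq i
    rw [Set.mem_Icc] at hz
    have := hprop i (z i) (q i) h1 hz.1 hz.2
    exact Set.mem_Icc.mpr this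

private lemma B_closed {d : ℕ} (hd : 1 ≤ d) (C : Set (Fin d → ℤ)) :
    IsClosed (⋃ x ∈ C, cell x) := by
  apply isClosed_of_closure_subset
  intro p hp
  obtain ⟨ε, hε, hprop⟩ := glob_eps hd p
  obtain ⟨q, hqB, hdist⟩ := Metric.mem_closure_iff.mp hp ε hε
  simp only [Set.mem_iUnion] at hqB ⊢
  obtain ⟨x, hxC, hqx⟩ := hqB
  exact ⟨x, hxC, hprop x q (by rwa [dist_comm]) hqx⟩

private lemma path_lemma {d : ℕ} (C : Set (Fin d → ℤ)) (p : Fin d → ℝ) :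
    ∀ (n : ℕ) (x z : Fin d → ℤ),
      (Finset.univ.filter (fun i => x i ≠ z i)).card = n →
      p ∈ cell x → p ∈ cell z → x ∈ C → z ∉ C →
      ∃ a b, a ∈ C ∧ b ∉ C ∧ adjZ a b ∧ p ∈ cell a ∧ p ∈ cell b := by
  intro n
  induction n with
  | zero =>
    intro x z hcard hx hz hxC hzC
    have hxz : x = z := by
      funext i
      by_contra hne
      have hi : i ∈ Finset.univ.filter (fun i => x i ≠ z i) := by simp [hne]
      rw [Finset.card_eq_zero.mp hcard] at hi
      simp at hi
    exact absurd (hxz ▸ hxC) hzC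
  | succ n ih =>
    intro x z hcard hx hz hxC hzC
    have hne : (Finset.univ.filter (fun i => x i ≠ z i)).Nonempty := by
      rw [← Finset.card_pos, hcard]; omega
    obtain ⟨i0, hi0⟩ := hne
    have hxz : x i0 ≠ z i0 := by simpa using hi0
    set x' := Function.update x i0 (z i0) with hx'def
    have hx'i0 : x' i0 = z i0 := Function.update_self _ _ _
    have hx'ne : ∀ i, i ≠ i0 → x' i = x i := fun i h => Function.update_of_ne h _ _
    have hpx' : p ∈ cell x' := by
      intro i
      by_cases h : i = i0
      · subst h; rw [hx'i0]; exact hz i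
      · rw [hx'ne i h]; exact hx i
    have b1 : (x i0 : ℝ) ≤ p i0 := (Set.mem_Icc.mp (hx i0)).1
    have b2 : p i0 ≤ (x i0 : ℝ) + 1 := (Set.mem_Icc.mp (hx i0)).2
    have b3 : (z i0 : ℝ) ≤ p i0 := (Set.mem_Icc.mp (hz i0)).1
    have b4 : p i0 ≤ (z i0 : ℝ) + 1 := (Set.mem_Icc.mp (hz i0)).2
    have c1 : x i0 ≤ z i0 + 1 := by
      have : (x i0:ℝ) ≤ (z i0:ℝ) + 1 := by linarith
      exact_mod_cast this
    have c2 : z i0 ≤ x i0 + 1 := by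
      have : (z i0:ℝ) ≤ (x i0:ℝ) + 1 := by linarith
      exact_mod_cast this
    have hdiff : x i0 - z i0 = 1 ∨ x i0 - z i0 = -1 := by omega
    have hadj : adjZ x x' := by
      unfold adjZ
      rw [Finset.sum_eq_single i0]
      · rw [hx'i0]
        rcases hdiff with h | h <;> rw [show x i0 - z i0 = _ from h] <;> norm_num
      · intro i _ hne2
        rw [hx'ne i hne2]; simp
      · simp
    by_cases hx'C : x' ∈ C
    · have hcard' : (Finset.univ.filter (fun i => x' i ≠ z i)).card = n := by
        have hset : (Finset.univ.filter (fun i => x' i ≠ z i))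
            = (Finset.univ.filter (fun i => x i ≠ z i)).erase i0 := by
          ext i
          by_cases h : i = i0
          · subst h; simp [hx'i0]
          · simp [hx'ne i h, h]
        rw [hset, Finset.card_erase_of_mem hi0, hcard]; omega
      exact ih x' z hcard' hpx' hz hx'C hzC
    · exact ⟨x, x', hxC, hx'C, hadj, hx, hpx'⟩

/-- for a connected cluster `C*` of dual vertices, the topological
boundary of the union of occupied cells equals the union, over all boundary
edges `⟨x*, y*⟩` of `C*`, of the faces `Q_{e*} = B_{x*} ∩ B_{y*}`. -/
theorem cluster_boundary_eq {d : ℕ} (hd : 1 ≤ d) (C : Set (Fin d → ℤ)) (hne : C.Nonempty)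
    (hconn : ∀ x ∈ C, ∀ y ∈ C,
      Relation.ReflTransGen (fun a b => adjZ a b ∧ a ∈ C ∧ b ∈ C) x y) :
    frontier (⋃ x ∈ C, cell x)
      = ⋃ (x ∈ C), ⋃ (y ∈ {y | adjZ x y ∧ y ∉ C}), cell x ∩ cell y := by
  have hclosed := B_closed hd C
  ext p
  rw [frontier_eq_closure_inter_closure]
  simp only [Set.mem_inter_iff]
  constructor
  · rintro ⟨hB, hBc⟩
    rw [hclosed.closure_eq] at hB
    obtain ⟨ε, hε, hprop⟩ := glob_eps hd p
    obtain ⟨q, hq, hdist⟩ := Metric.mem_closure_iff.mp hBc ε hε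
    simp only [Set.mem_compl_iff, Set.mem_iUnion] at hq
    set z : Fin d → ℤ := fun i => ⌊q i⌋ with hzdef
    have hqz : q ∈ cell z := fun i =>
      Set.mem_Icc.mpr ⟨Int.floor_le _, (Int.lt_floor_add_one (q i)).le⟩
    have hzC : z ∉ C := fun h => hq ⟨z, h, hqz⟩
    have hpz : p ∈ cell z := hprop z q (by rwa [dist_comm]) hqz
    simp only [Set.mem_iUnion] at hB
    obtain ⟨x, hxC, hpx⟩ := hB
    obtain ⟨a, b, haC, hbC, hadj, hpa, hpb⟩ :=
      path_lemma C p _ x z rfl hpx hpz hxC hzC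
    simp only [Set.mem_iUnion, Set.mem_setOf_eq]
    exact ⟨a, haC, b, ⟨hadj, hbC⟩, hpa, hpb⟩
  · intro hp
    simp only [Set.mem_iUnion, Set.mem_setOf_eq] at hp
    obtain ⟨x, hxC, y, ⟨hadj, hyC⟩, hpx, hpy⟩ := hp
    constructor
    · exact subset_closure (Set.mem_biUnion hxC hpx)
    · rw [Metric.mem_closure_iff]
      intro ε hε
      set δ := min (ε/2) (4⁻¹ : ℝ) with hδdef
      have hδ0 : 0 < δ := lt_min (by linarith) (by norm_num)
      have hδ4 : δ ≤ 4⁻¹ := min_le_right _ _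
      set q : Fin d → ℝ :=
        fun i => max ((y i : ℝ) + δ) (min (p i) ((y i : ℝ) + 1 - δ)) with hqdef
      have hy1 : ∀ i, (y i : ℝ) ≤ p i := fun i => (Set.mem_Icc.mp (hpy i)).1
      have hy2 : ∀ i, p i ≤ (y i : ℝ) + 1 := fun i => (Set.mem_Icc.mp (hpy i)).2
      have hqlo : ∀ i, (y i : ℝ) + δ ≤ q i := fun i => le_max_left _ _
      have hqhi : ∀ i, q i ≤ (y i : ℝ) + 1 - δ := fun i =>
        max_le (by linarith) (min_le_right _ _)
      have hqd : ∀ i, |p i - q i| ≤ δ := by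
        intro i
        rw [abs_le]
        constructor
        · have : q i ≤ p i + δ :=
            max_le (by linarith [hy1 i])
              (by linarith [min_le_left (p i) ((y i:ℝ) + 1 - δ)])
          linarith
        · have : p i - δ ≤ q i :=
            le_trans (le_min (by linarith) (by linarith [hy2 i])) (le_max_right _ _)
          linarith
      refine ⟨q, ?_, ?_⟩
      · simp only [Set.mem_compl_iff, Set.mem_iUnion]
        rintro ⟨w, hwC, hqw⟩
        have hw : w = y := by
          funext i
          have d1 : (w i : ℝ) ≤ q i := (Set.mem_Icc.mp (hqw i)).1
          have d2 : q i ≤ (w i : ℝ) + 1 := (Set.mem_Icc.mp (hqw i)).2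
          have e1 : (w i : ℝ) < (y i : ℝ) + 1 := by linarith [hqhi i]
          have e2 : (y i : ℝ) < (w i : ℝ) + 1 := by linarith [hqlo i]
          have f1 : w i < y i + 1 := by exact_mod_cast e1
          have f2 : y i < w i + 1 := by exact_mod_cast e2
          omega
        exact hyC (hw ▸ hwC)
      · have hd1 : dist p q ≤ δ := by
          rw [dist_pi_le_iff hδ0.le]
          intro i
          rw [Real.dist_eq]
          exact hqd i
        calc dist p q ≤ δ := hd1
          _ ≤ ε/2 := min_le_left _ _
          _ < ε := by linarith

end
end HP
end

section
/- Let (Ω, ℱ, P_p) be a product Bernoulli(p) space over a countable index set S, with the pointwise partial order on Ω = {0,1}^S. If A and B are increasing events (ω ∈ A and ω ≤ ω′ imply ω′ ∈ A, and similarly for B), then P_p(A ∩ B) ≥ P_p(A) · P_p(B). -/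
open MeasureTheory Set Relation Filter

namespace HP

noncomputable section

/-!
For a finite set `t` of coordinates, the probabilities of `A` and `B` conditioned on `ω|_t` are
increasing functions on the finite distributive lattice `{0,1}^t`, whose product weights satisfy
the FKG lattice condition (with equality). The finite FKG inequality therefore gives
`P(A) P(B) ≤ E[P(A | ω|_t) P(B | ω|_t)]`. Approximating `A` in measure by an event `C` depending
only on `t`, the conditional probability of `A` is within that of `A ∆ C` of the indicator of `C`,
so the right-hand side is at most `P(A ∩ B) + 2 P(A ∆ C)`, which is arbitrarily close to
`P(A ∩ B)`.
-/

open ProbabilityTheory MeasurableSpace Function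
open scoped symmDiff

lemma Finset.prod_mul_prod_eq_prod_inf_mul_prod_sup {ι α M : Type*} [LinearOrder α]
    [CommMonoid M] (s : Finset ι) (f : α → M) (a b : ι → α) :
    (∏ i ∈ s, f (a i)) * ∏ i ∈ s, f (b i) =
      (∏ i ∈ s, f ((a ⊓ b) i)) * ∏ i ∈ s, f ((a ⊔ b) i) := by
  simp only [← Finset.prod_mul_distrib, Pi.inf_apply, Pi.sup_apply]
  refine Finset.prod_congr rfl fun i _ => ?_
  rcases le_total (a i) (b i) with h | h
  · rw [inf_eq_left.2 h, sup_eq_right.2 h]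
  · rw [inf_eq_right.2 h, sup_eq_left.2 h, mul_comm]

theorem exists_cylinder_measure_symmDiff_lt {ι : Type*} {α : ι → Type*}
    [∀ i, MeasurableSpace (α i)] {μ : Measure (∀ i, α i)} [IsFiniteMeasure μ]
    {A : Set (∀ i, α i)} (hA : MeasurableSet A) {ε : ENNReal} (hε : 0 < ε) :
    ∃ (t : Finset ι) (P : Set (∀ i : t, α i)), MeasurableSet P ∧ μ (cylinder t P ∆ A) < ε := by
  obtain ⟨C, hC, hCA⟩ := exists_measure_symmDiff_lt_of_generateFrom_isSetRing (μ := μ)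
    isSetRing_measurableCylinders
    ⟨{Set.univ}, countable_singleton _,
      Set.singleton_subset_iff.2 (univ_mem_measurableCylinders _), by simp⟩
    generateFrom_measurableCylinders.symm hA hε
  obtain ⟨t, P, hP, rfl⟩ := (mem_measurableCylinders C).1 hC
  exact ⟨t, P, hP, hCA⟩

lemma measurable_apply_generateFrom_eq_true {S : Type*} (i : S) :
    Measurable[generateFrom {{ω : S → Bool | ω i = true}}] (fun ω => ω i) :=
  @measurable_to_bool _ (generateFrom _) _ (measurableSet_generateFrom rfl)

section BernoulliProduct

variable {S : Type*} {p : ℝ} {μ : Measure (S → Bool)}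

lemma measurableSet_apply_eq_true (i : S) : MeasurableSet {ω : S → Bool | ω i = true} :=
  measurableSet_eq_fun (measurable_pi_apply i) measurable_const

lemma measurableSet_restrict_preimage_singleton {t : Finset S} (a : t → Bool) :
    MeasurableSet (t.restrict ⁻¹' {a} : Set (S → Bool)) :=
  Finset.measurable_restrict t (measurableSet_singleton a)

lemma IsBernoulliProduct.iIndepSet_eq_true (hμ : IsBernoulliProduct p μ) :
    iIndepSet (fun i => {ω : S → Bool | ω i = true}) μ := by
  have hsingle (i : S) : μ {ω : S → Bool | ω i = true} = ENNReal.ofReal p := by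
    simpa using hμ.2 {i} fun _ => true
  refine (iIndepSet_iff_meas_biInter measurableSet_apply_eq_true).2 fun s => ?_
  simpa [Set.iInter_ofPred, hsingle] using hμ.2 s fun _ => true

variable [DecidableEq S]

lemma sum_measureReal_restrict_preimage_singleton (ν : Measure (S → Bool)) [IsFiniteMeasure ν]
    (t : Finset S) : ∑ a : t → Bool, ν.real (t.restrict ⁻¹' {a}) = ν.real Set.univ := by
  rw [sum_measureReal_preimage_singleton _ fun a _ => measurableSet_restrict_preimage_singleton a,
    Finset.coe_univ, Set.preimage_univ]

namespace IsBernoulliProduct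

lemma measure_inter_restrict_preimage_singleton (hμ : IsBernoulliProduct p μ)
    {A : Set (S → Bool)} (hA : MeasurableSet A) (t : Finset S) (a : t → Bool) :
    μ (A ∩ t.restrict ⁻¹' {a}) =
      μ ((updateFinset · t a) ⁻¹' A) * μ (t.restrict ⁻¹' {a}) := by
  set m : S → MeasurableSpace (S → Bool) := fun i => generateFrom {{ω | ω i = true}}
  have hm (i : S) : m i ≤ MeasurableSpace.pi :=
    generateFrom_le fun _ h => h ▸ measurableSet_apply_eq_true i
  have hcoord {T : Set S} {i : S} (hi : i ∈ T) : Measurable[⨆ j ∈ T, m j] (fun ω => ω i) :=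
    (measurable_apply_generateFrom_eq_true i).mono (le_iSup₂ (f := fun j _ => m j) i hi) le_rfl
  have hindep := indep_iSup_of_disjoint hm hμ.iIndepSet_eq_true
    (disjoint_compl_right (a := (t : Set S)))
  have hupdate : Measurable[⨆ j ∈ (t : Set S)ᶜ, m j] (updateFinset · t a) := by
    refine @measurable_pi_lambda _ _ _ (_) _ _ fun i => ?_
    by_cases hi : i ∈ t
    · simp only [updateFinset, dif_pos hi]
      exact measurable_const
    · simp only [updateFinset, dif_neg hi]
      exact hcoord hi
  have hrestrict : Measurable[⨆ j ∈ (t : Set S), m j] t.restrict :=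
    @measurable_pi_lambda _ _ _ (_) _ _ fun i => hcoord i.2
  have hfiber : A ∩ t.restrict ⁻¹' {a} = (updateFinset · t a) ⁻¹' A ∩ t.restrict ⁻¹' {a} := by
    ext ω
    simp only [Set.mem_inter_iff, Set.mem_preimage, Set.mem_singleton_iff, and_congr_left_iff]
    rintro rfl
    rw [updateFinset_restrict]
  rw [hfiber]
  exact (Indep_iff _ _ μ).1 hindep.symm _ _ (hupdate hA) (hrestrict (measurableSet_singleton a))

lemma measure_restrict_preimage_singleton (hμ : IsBernoulliProduct p μ) (t : Finset S)
    (a : t → Bool) :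
    μ (t.restrict ⁻¹' {a}) =
      ∏ i : t, if a i then ENNReal.ofReal p else ENNReal.ofReal (1 - p) := by
  have hcyl : (t.restrict ⁻¹' {a} : Set (S → Bool)) =
      {ω | ∀ i ∈ t, ω i = updateFinset (fun _ => false) t a i} := by
    ext ω
    simp +contextual [funext_iff, updateFinset]
  rw [hcyl, hμ.2, ← Finset.prod_coe_sort]
  simp [updateFinset]

end IsBernoulliProduct

/-- For a product measure, the conditional probability of `A` given `ω|_t = a`
(`IsBernoulliProduct.measure_inter_restrict_preimage_singleton`). -/
def condProb (μ : Measure (S → Bool)) (t : Finset S) (A : Set (S → Bool)) (a : t → Bool) : ℝ :=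
  μ.real ((updateFinset · t a) ⁻¹' A)

section condProb

variable {t : Finset S} {A B : Set (S → Bool)}

lemma condProb_nonneg (a : t → Bool) : 0 ≤ condProb μ t A a :=
  measureReal_nonneg

lemma condProb_le_one [IsProbabilityMeasure μ] (a : t → Bool) : condProb μ t A a ≤ 1 :=
  measureReal_le_one

lemma monotone_condProb [IsFiniteMeasure μ] (hA : IsUpperSet A) :
    Monotone (condProb μ t A) := by
  intro a a' haa'
  refine measureReal_mono fun ω hω => hA (fun i => ?_) hω
  by_cases hi : i ∈ t
  · simpa [updateFinset, hi] using haa' ⟨i, hi⟩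
  · simp [updateFinset, hi]

lemma condProb_le_add_symmDiff [IsFiniteMeasure μ] (C : Set (S → Bool)) (a : t → Bool) :
    condProb μ t A a ≤ condProb μ t C a + condProb μ t (C ∆ A) a := by
  refine (measureReal_mono ?_).trans (measureReal_union_le _ _)
  rw [← Set.preimage_union]
  exact Set.preimage_mono (le_symmDiff_sup_left C A |>.trans_eq (sup_comm _ _))

lemma condProb_cylinder_mul [IsProbabilityMeasure μ] {P : Set (t → Bool)} (a : t → Bool) :
    condProb μ t (cylinder t P) a * condProb μ t B a = condProb μ t (cylinder t P ∩ B) a := by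
  have hcyl : (updateFinset · t a) ⁻¹' (cylinder t P : Set (S → Bool)) = {_ω | a ∈ P} := by
    ext ω
    simp [cylinder, restrict_updateFinset]
  by_cases ha : a ∈ P <;> simp [condProb, Set.preimage_inter, hcyl, ha]

end condProb

namespace IsBernoulliProduct

variable {A B : Set (S → Bool)}

lemma measureReal_eq_sum_condProb (hμ : IsBernoulliProduct p μ) (hA : MeasurableSet A)
    (t : Finset S) :
    μ.real A = ∑ a : t → Bool, μ.real (t.restrict ⁻¹' {a}) * condProb μ t A a := by
  have := hμ.1
  calc μ.real A = ∑ a : t → Bool, (μ.restrict A).real (t.restrict ⁻¹' {a}) := by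
        rw [sum_measureReal_restrict_preimage_singleton, measureReal_restrict_apply_univ]
    _ = ∑ a : t → Bool, μ.real (t.restrict ⁻¹' {a}) * condProb μ t A a := by
        refine Finset.sum_congr rfl fun a _ => ?_
        rw [measureReal_restrict_apply (measurableSet_restrict_preimage_singleton a),
          Set.inter_comm, measureReal_def, hμ.measure_inter_restrict_preimage_singleton hA,
          ENNReal.toReal_mul, mul_comm]
        rfl

lemma measureReal_restrict_preimage_mul_le (hμ : IsBernoulliProduct p μ) (t : Finset S)
    (a b : t → Bool) :
    μ.real (t.restrict ⁻¹' {a}) * μ.real (t.restrict ⁻¹' {b}) ≤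
      μ.real (t.restrict ⁻¹' {a ⊓ b}) * μ.real (t.restrict ⁻¹' {a ⊔ b}) := by
  simp only [measureReal_def, ← ENNReal.toReal_mul, hμ.measure_restrict_preimage_singleton]
  exact (congrArg ENNReal.toReal (Finset.prod_mul_prod_eq_prod_inf_mul_prod_sup _
    (fun x : Bool => if x then ENNReal.ofReal p else ENNReal.ofReal (1 - p)) a b)).le

lemma measureReal_mul_le_sum_condProb_mul (hμ : IsBernoulliProduct p μ) (hA : MeasurableSet A)
    (hB : MeasurableSet B) (hAup : IsUpperSet A) (hBup : IsUpperSet B) (t : Finset S) :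
    μ.real A * μ.real B ≤
      ∑ a : t → Bool, μ.real (t.restrict ⁻¹' {a}) * (condProb μ t A a * condProb μ t B a) := by
  have := hμ.1
  have hfkg := fkg (condProb μ t A) (condProb μ t B) (fun a => μ.real (t.restrict ⁻¹' {a}))
    (fun _ => measureReal_nonneg) (fun _ => condProb_nonneg _) (fun _ => condProb_nonneg _)
    (monotone_condProb hAup) (monotone_condProb hBup) (hμ.measureReal_restrict_preimage_mul_le t)
  rwa [sum_measureReal_restrict_preimage_singleton, probReal_univ, one_mul,
    ← hμ.measureReal_eq_sum_condProb hA, ← hμ.measureReal_eq_sum_condProb hB] at hfkg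

lemma measureReal_mul_le_add_symmDiff (hμ : IsBernoulliProduct p μ) (hA : MeasurableSet A)
    (hB : MeasurableSet B) (hAup : IsUpperSet A) (hBup : IsUpperSet B) {t : Finset S}
    {P : Set (t → Bool)} (hP : MeasurableSet P) :
    μ.real A * μ.real B ≤ μ.real (A ∩ B) + 2 * μ.real (cylinder t P ∆ A) := by
  have := hμ.1
  set C : Set (S → Bool) := cylinder t P
  have hC : MeasurableSet C := hP.cylinder
  calc μ.real A * μ.real B
      ≤ ∑ a : t → Bool, μ.real (t.restrict ⁻¹' {a}) * (condProb μ t A a * condProb μ t B a) :=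
        hμ.measureReal_mul_le_sum_condProb_mul hA hB hAup hBup t
    _ ≤ ∑ a : t → Bool, μ.real (t.restrict ⁻¹' {a}) *
          (condProb μ t (C ∩ B) a + condProb μ t (C ∆ A) a) := by
        gcongr with a
        calc condProb μ t A a * condProb μ t B a
            ≤ (condProb μ t C a + condProb μ t (C ∆ A) a) * condProb μ t B a :=
              mul_le_mul_of_nonneg_right (condProb_le_add_symmDiff C a) (condProb_nonneg a)
          _ ≤ condProb μ t C a * condProb μ t B a + condProb μ t (C ∆ A) a := by
              rw [add_mul]
              exact add_le_add_right
                (mul_le_of_le_one_right (condProb_nonneg a) (condProb_le_one a)) _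
          _ = condProb μ t (C ∩ B) a + condProb μ t (C ∆ A) a := by
              rw [condProb_cylinder_mul]
    _ = μ.real (C ∩ B) + μ.real (C ∆ A) := by
        rw [hμ.measureReal_eq_sum_condProb (hC.inter hB) t,
          hμ.measureReal_eq_sum_condProb (hC.symmDiff hA) t, ← Finset.sum_add_distrib]
        simp only [mul_add]
    _ ≤ μ.real (A ∩ B) + μ.real (C ∆ A) + μ.real (C ∆ A) := by
        gcongr
        refine (measureReal_mono (s₂ := A ∩ B ∪ C ∆ A) ?_).trans (measureReal_union_le _ _)
        rintro ω ⟨hωC, hωB⟩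
        by_cases hωA : ω ∈ A
        · exact Or.inl ⟨hωA, hωB⟩
        · exact Or.inr (Or.inl ⟨hωC, hωA⟩)
    _ = μ.real (A ∩ B) + 2 * μ.real (C ∆ A) := by ring

end IsBernoulliProduct

end BernoulliProduct

theorem fkg_increasing_events_general {S : Type*} (p : ℝ)
    (μ : Measure (S → Bool)) (hμ : IsBernoulliProduct p μ)
    (A B : Set (S → Bool)) (hA : MeasurableSet A) (hB : MeasurableSet B)
    (hAup : ∀ ω ω' : S → Bool, (∀ s, ω s = true → ω' s = true) → ω ∈ A → ω' ∈ A)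
    (hBup : ∀ ω ω' : S → Bool, (∀ s, ω s = true → ω' s = true) → ω ∈ B → ω' ∈ B) :
    μ A * μ B ≤ μ (A ∩ B) := by
  classical
  have := hμ.1
  have hA' : IsUpperSet A := fun ω ω' h => hAup ω ω' fun s => Bool.le_iff_imp.1 (h s)
  have hB' : IsUpperSet B := fun ω ω' h => hBup ω ω' fun s => Bool.le_iff_imp.1 (h s)
  suffices h : μ.real A * μ.real B ≤ μ.real (A ∩ B) by
    simp only [measureReal_def, ← ENNReal.toReal_mul] at h
    exact (ENNReal.toReal_le_toReal (by finiteness) (by finiteness)).1 h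
  refine le_of_forall_pos_le_add fun ε hε => ?_
  obtain ⟨t, P, hP, hPA⟩ :=
    exists_cylinder_measure_symmDiff_lt (μ := μ) hA (ENNReal.ofReal_pos.2 (half_pos hε))
  have hPA' : μ.real (cylinder t P ∆ A) < ε / 2 := ENNReal.toReal_lt_of_lt_ofReal hPA
  linarith [hμ.measureReal_mul_le_add_symmDiff hA hB hA' hB' hP]

/-- FKG/Harris inequality for events: in the Bernoulli(p) product
space over a countable index set `S`, increasing events are positively
correlated: `P(A ∩ B) ≥ P(A)·P(B)`. -/
theorem fkg_increasing_events {S : Type*} [Countable S] (p : ℝ)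
    (hp0 : 0 ≤ p) (hp1 : p ≤ 1)
    (μ : Measure (S → Bool)) (hμ : IsBernoulliProduct p μ)
    (A B : Set (S → Bool)) (hA : MeasurableSet A) (hB : MeasurableSet B)
    (hAup : ∀ ω ω' : S → Bool, (∀ s, ω s = true → ω' s = true) → ω ∈ A → ω' ∈ A)
    (hBup : ∀ ω ω' : S → Bool, (∀ s, ω s = true → ω' s = true) → ω ∈ B → ω' ∈ B) :
    μ A * μ B ≤ μ (A ∩ B) :=
  fkg_increasing_events_general p μ hμ A B hA hB hAup hBup

end
end HP
end

section
/- Almost surely, lim_{n→∞} |G^n(ω)| / |B̃(n)| = κ(1−p), where |G^n(ω)| is the number of vertices of the hole graph restricted to the window Λ^n = [−n,n]^d (equivalently, the number of finite dual clusters entirely contained in B̃(n)) and κ(q) = E_q(|C(0)|^{−1}) for bond percolation with parameter q (with the convention |C(0)|^{−1} = 0 when |C(0)| = ∞). -/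
open MeasureTheory Set Relation Filter

namespace HP

noncomputable section

/-!
Each finite dual cluster `C ⊆ B̃(n)` is counted once by `∑_{x ∈ B̃(n)} 1{C(x) ⊆ B̃(n)} / |C(x)|`.
Replacing `1{C(x) ⊆ B̃(n)}` by `1{C(x) ⊆ x + [-m, m]^d}` changes each term by at most `1/(m+1)`
(an escaping finite cluster has more than `m + 1` sites), except on the boundary layer of width
`m` of the window. The truncated terms depend only on finitely many faces near `x`, have the same
law by translation invariance, and are independent at sup-distance greater than `2m + 2`, so
their window sum has variance `O((2n)^d m^d)`. Since `d ≥ 2` the normalised variances are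
summable, so by Chebyshev's inequality and Borel–Cantelli the truncated averages converge almost
surely to `κ_m = E|C(0)|⁻¹ 1{C(0) ⊆ [-m, m]^d}`, which tends to `κ` as `m → ∞`.
-/
open ProbabilityTheory
open scoped Topology ENNReal

theorem _root_.Relation.ReflTransGen.exists_eq_of_le_of_le {α : Type*} {r : α → α → Prop}
    {f : α → ℕ} (hf : ∀ b c, r b c → f c ≤ f b + 1) {a b : α} (hab : ReflTransGen r a b)
    {k : ℕ} (hak : f a ≤ k) (hkb : k ≤ f b) : ∃ c, ReflTransGen r a c ∧ f c = k := by
  induction hab with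
  | refl => exact ⟨a, .refl, by omega⟩
  | @tail b c hab hbc ih =>
    by_cases hk : k ≤ f b
    · exact ih hk
    · exact ⟨c, hab.tail hbc, by have := hf b c hbc; omega⟩

open scoped Classical in
theorem ncard_classes_subset_eq_sum {α : Type*} (c : α → Set α) (hself : ∀ x, x ∈ c x)
    (hc : ∀ x y, y ∈ c x → c y = c x) (W : Finset α) :
    ({C | (∃ x, C = c x) ∧ C.Finite ∧ C ⊆ W}.ncard : ℝ)
      = ∑ x ∈ W, if c x ⊆ W then ((c x).ncard : ℝ)⁻¹ else 0 := by
  set W' := W.filter fun x => c x ⊆ W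
  have hclasses : {C | (∃ x, C = c x) ∧ C.Finite ∧ C ⊆ W} = ↑(W'.image c) := by
    ext C
    simp only [mem_ofPred_eq, Finset.coe_image, Finset.coe_filter, mem_image, W']
    constructor
    · rintro ⟨⟨x, rfl⟩, -, hxW⟩
      exact ⟨x, ⟨hxW (hself x), hxW⟩, rfl⟩
    · rintro ⟨x, ⟨-, hxW⟩, rfl⟩
      exact ⟨⟨x, rfl⟩, W.finite_toSet.subset hxW, hxW⟩
  have hfiber : ∀ x ∈ W', (1 : ℝ) = ∑ y ∈ W' with c y = c x, ((c y).ncard : ℝ)⁻¹ := by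
    intro x hx
    have hcoe : ↑(W'.filter fun y => c y = c x) = c x := by
      ext y
      simp only [Finset.coe_filter, mem_ofPred_eq, W', Finset.mem_filter]
      refine ⟨fun h => h.2 ▸ hself y, fun hy => ?_⟩
      have hxW := (Finset.mem_filter.1 hx).2
      rw [hc x y hy]
      exact ⟨⟨hxW hy, hxW⟩, rfl⟩
    have hpos : ((c x).ncard : ℝ) ≠ 0 := by
      rw [Nat.cast_ne_zero, ← hcoe, ncard_coe_finset]
      exact Finset.card_ne_zero.2 ⟨x, by simp [W', hx]⟩
    rw [Finset.sum_congr rfl fun y hy => by rw [(Finset.mem_filter.1 hy).2], Finset.sum_const,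
      ← ncard_coe_finset, hcoe, nsmul_eq_mul, mul_inv_cancel₀ hpos]
  rw [hclasses, ncard_coe_finset, Finset.card_eq_sum_ones, Nat.cast_sum, Nat.cast_one,
    Finset.sum_image' _ hfiber, Finset.sum_filter]

section DualCluster

variable {d : ℕ}

theorem adjZ_comm {x y : Fin d → ℤ} : adjZ x y ↔ adjZ y x := by
  simp only [adjZ, abs_sub_comm]

theorem adjZ.abs_sub_le_one {x y : Fin d → ℤ} (h : adjZ x y) (i : Fin d) : |x i - y i| ≤ 1 :=
  h ▸ Finset.single_le_sum (f := fun j => |x j - y j|) (fun _ _ => abs_nonneg _)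
    (Finset.mem_univ i)

theorem faceBetween_comm (x y : Fin d → ℤ) : faceBetween x y = faceBetween y x := by
  funext i
  simp only [faceBetween, eq_comm (a := x i), max_comm]
  split_ifs with h <;> simp [h]

instance (ω : Face d → Bool) : Std.Symm (dualOpen ω) where
  symm _ _ h := ⟨adjZ_comm.1 h.1, fun Q hQ => h.2 Q (hQ.trans (faceBetween_comm _ _))⟩

theorem mem_dualCluster_self (ω : Face d → Bool) (x : Fin d → ℤ) : x ∈ dualCluster ω x :=
  ReflTransGen.refl

theorem dualCluster_eq_of_mem {ω : Face d → Bool} {x y : Fin d → ℤ}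
    (h : y ∈ dualCluster ω x) : dualCluster ω y = dualCluster ω x := by
  have hsymm : ReflTransGen (dualOpen ω) y x := Std.Symm.symm _ _ h
  ext z
  exact ⟨h.trans, hsymm.trans⟩

theorem dualCluster_congr {ω ω' : Face d → Bool} {x : Fin d → ℤ} {S : Set (Fin d → ℤ)}
    (hS : dualCluster ω x ⊆ S)
    (hagree : ∀ y ∈ S, ∀ z, adjZ y z → ∀ Q : Face d, Q.1 = faceBetween y z → ω Q = ω' Q) :
    dualCluster ω' x = dualCluster ω x := by
  have hopen : ∀ y ∈ S, ∀ z, dualOpen ω y z ↔ dualOpen ω' y z := fun y hy z =>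
    ⟨fun h => ⟨h.1, fun Q hQ => hagree y hy z h.1 Q hQ ▸ h.2 Q hQ⟩,
      fun h => ⟨h.1, fun Q hQ => (hagree y hy z h.1 Q hQ).symm ▸ h.2 Q hQ⟩⟩
  refine Subset.antisymm (fun y hy => ?_) (fun y hy => ?_)
  · induction hy with
    | refl => exact mem_dualCluster_self ω x
    | tail _ hbc ih => exact ReflTransGen.tail ih ((hopen _ (hS ih) _).2 hbc)
  · induction hy with
    | refl => exact ReflTransGen.refl
    | tail hab hbc ih => exact ReflTransGen.tail ih ((hopen _ (hS hab) _).1 hbc)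

def dualBox (x : Fin d → ℤ) (m : ℕ) : Finset (Fin d → ℤ) :=
  Fintype.piFinset fun i => Finset.Icc (x i - m) (x i + m)

theorem mem_dualBox {x y : Fin d → ℤ} {m : ℕ} : y ∈ dualBox x m ↔ ∀ i, |y i - x i| ≤ m := by
  simp only [dualBox, Fintype.mem_piFinset, Finset.mem_Icc, abs_le]
  exact forall_congr' fun i => by omega

theorem card_dualBox (x : Fin d → ℤ) (m : ℕ) : (dualBox x m).card = (2 * m + 1) ^ d := by
  simp only [dualBox, Fintype.card_piFinset, Int.card_Icc]
  rw [Finset.prod_congr rfl fun i _ => (by omega : (x i + m + 1 - (x i - m)).toNat = 2 * m + 1)]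
  simp

theorem le_ncard_dualCluster_of_not_subset {ω : Face d → Bool} {x : Fin d → ℤ} {m : ℕ}
    (hfin : (dualCluster ω x).Finite) (hout : ¬ dualCluster ω x ⊆ dualBox x m) :
    m + 2 ≤ (dualCluster ω x).ncard := by
  obtain ⟨y, hy, hyout⟩ := not_subset.1 hout
  obtain ⟨i, hi⟩ : ∃ i, (m : ℤ) < |y i - x i| := by
    simpa [mem_dualBox] using hyout
  set f : (Fin d → ℤ) → ℕ := fun z => (z i - x i).natAbs
  have hfy : m < f y := by
    rw [Int.abs_eq_natAbs] at hi
    exact_mod_cast hi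
  have hstep : ∀ b c, dualOpen ω b c → f c ≤ f b + 1 := fun b c h => by
    have := h.1.abs_sub_le_one i
    simp only [f, abs_le] at this ⊢
    omega
  have hrange : ↑(Finset.range (m + 2)) ⊆ f '' dualCluster ω x := fun k hk => by
    obtain ⟨c, hc, rfl⟩ := ReflTransGen.exists_eq_of_le_of_le hstep hy (k := k) (by simp [f])
      (by simp only [Finset.coe_range, mem_Iio] at hk; omega)
    exact ⟨c, hc, rfl⟩
  calc m + 2 = (↑(Finset.range (m + 2)) : Set ℕ).ncard := by simp
    _ ≤ (f '' dualCluster ω x).ncard := ncard_le_ncard hrange (hfin.image f)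
    _ ≤ (dualCluster ω x).ncard := ncard_image_le hfin

end DualCluster

section InverseSize

variable {d : ℕ}

def window (d n : ℕ) : Finset (Fin d → ℤ) := Fintype.piFinset fun _ => Finset.Ico (-(n : ℤ)) n

theorem coe_window (d n : ℕ) : (window d n : Set (Fin d → ℤ)) = BnZ d n := by
  ext y
  simp [window, BnZ]

theorem card_window (d n : ℕ) : ((window d n).card : ℝ) = (2 * (n : ℝ)) ^ d := by
  simp only [window, Fintype.card_piFinset, Int.card_Ico, Finset.prod_const, Finset.card_univ,
    Fintype.card_fin]
  rw [show ((n : ℤ) - -(n : ℤ)).toNat = 2 * n by omega]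
  push_cast
  ring

theorem dualBox_subset_window {x : Fin d → ℤ} {n m : ℕ} (hx : x ∈ window d (n - m)) :
    dualBox x m ⊆ window d n := by
  intro y hy
  rw [mem_dualBox] at hy
  simp only [window, Fintype.mem_piFinset, Finset.mem_Ico] at hx ⊢
  intro i
  have := abs_le.1 (hy i)
  have := hx i
  omega

def invSizeIn (ω : Face d → Bool) (S : Set (Fin d → ℤ)) (x : Fin d → ℤ) : ℝ :=
  open scoped Classical in
  if dualCluster ω x ⊆ S then ((dualCluster ω x).ncard : ℝ)⁻¹ else 0

theorem invSizeIn_nonneg (ω : Face d → Bool) (S : Set (Fin d → ℤ)) (x : Fin d → ℤ) :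
    0 ≤ invSizeIn ω S x := by
  unfold invSizeIn
  split_ifs <;> positivity

theorem invSizeIn_le_inv_ncard (ω : Face d → Bool) (S : Set (Fin d → ℤ)) (x : Fin d → ℤ) :
    invSizeIn ω S x ≤ ((dualCluster ω x).ncard : ℝ)⁻¹ := by
  unfold invSizeIn
  split_ifs
  exacts [le_rfl, by positivity]

theorem inv_ncard_le_one {α : Type*} (s : Set α) : (s.ncard : ℝ)⁻¹ ≤ 1 := by
  rcases Nat.eq_zero_or_pos s.ncard with h | h
  · simp [h]
  · exact inv_le_one_of_one_le₀ (by exact_mod_cast h)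

theorem invSizeIn_le_one (ω : Face d → Bool) (S : Set (Fin d → ℤ)) (x : Fin d → ℤ) :
    invSizeIn ω S x ≤ 1 :=
  (invSizeIn_le_inv_ncard ω S x).trans (inv_ncard_le_one _)

theorem invSizeIn_mono (ω : Face d → Bool) {S T : Set (Fin d → ℤ)} (hST : S ⊆ T)
    (x : Fin d → ℤ) : invSizeIn ω S x ≤ invSizeIn ω T x := by
  unfold invSizeIn
  split_ifs with hS hT
  · rfl
  · exact absurd (hS.trans hST) hT
  · positivity
  · rfl

theorem inv_ncard_le_invSizeIn_dualBox_add (ω : Face d → Bool) (x : Fin d → ℤ) (m : ℕ) :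
    ((dualCluster ω x).ncard : ℝ)⁻¹ ≤ invSizeIn ω (dualBox x m) x + ((m : ℝ) + 1)⁻¹ := by
  unfold invSizeIn
  split_ifs with hbox
  · exact le_add_of_nonneg_right (by positivity)
  rw [zero_add]
  by_cases hfin : (dualCluster ω x).Finite
  · have := le_ncard_dualCluster_of_not_subset hfin hbox
    exact inv_anti₀ (by positivity) (by exact_mod_cast (by omega : m + 1 ≤ _))
  · rw [Set.Infinite.ncard hfin, Nat.cast_zero, inv_zero]
    positivity

theorem ncard_dualClusters_subset_eq_sum (ω : Face d → Bool) (n : ℕ) :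
    ({C : Set (Fin d → ℤ) | (∃ x, C = dualCluster ω x) ∧ C.Finite ∧ C ⊆ BnZ d n}.ncard : ℝ)
      = ∑ x ∈ window d n, invSizeIn ω (BnZ d n) x := by
  rw [← coe_window]
  exact ncard_classes_subset_eq_sum _ (mem_dualCluster_self ω)
    (fun _ _ => dualCluster_eq_of_mem) _

end InverseSize

section Locality

variable {d : ℕ}

/-- A finite set of faces containing every face that can decide the cluster of `x` as long as
this cluster stays in `dualBox x m`. -/
def boxFaces (x : Fin d → ℤ) (m : ℕ) : Finset (Face d) :=
  open scoped Classical in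
  ((dualBox x (m + 1) ×ˢ dualBox x (m + 1)).image fun q => faceBetween q.1 q.2).subtype IsFace

theorem faceBetween_mem_boxFaces {x y z : Fin d → ℤ} {m : ℕ} (hy : y ∈ dualBox x m)
    (hyz : adjZ y z) {Q : Face d} (hQ : Q.1 = faceBetween y z) : Q ∈ boxFaces x m := by
  have hz : z ∈ dualBox x (m + 1) := mem_dualBox.2 fun i => by
    have := abs_le.1 (mem_dualBox.1 hy i)
    have := abs_le.1 (hyz.abs_sub_le_one i)
    rw [abs_le]
    push_cast
    omega
  have hy' : y ∈ dualBox x (m + 1) := mem_dualBox.2 fun i => by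
    have := mem_dualBox.1 hy i
    push_cast
    omega
  simp only [boxFaces, Finset.mem_subtype, Finset.mem_image, Finset.mem_product]
  exact ⟨(y, z), ⟨hy', hz⟩, hQ.symm⟩

theorem abs_sub_le_of_mem_boxFaces {x : Fin d → ℤ} {m : ℕ} {Q : Face d}
    (hQ : Q ∈ boxFaces x m) (i : Fin d) : |(Q.1 i).1 - x i| ≤ m + 1 := by
  simp only [boxFaces, Finset.mem_subtype, Finset.mem_image, Finset.mem_product] at hQ
  obtain ⟨⟨y, z⟩, ⟨hy, hz⟩, hQ⟩ := hQ
  have := abs_le.1 (mem_dualBox.1 hy i)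
  have := abs_le.1 (mem_dualBox.1 hz i)
  rw [← hQ, abs_le]
  simp only [faceBetween]
  split_ifs <;> push_cast at * <;> omega

theorem disjoint_boxFaces {x y : Fin d → ℤ} {m : ℕ} (i : Fin d)
    (h : 2 * (m : ℤ) + 2 < |x i - y i|) : Disjoint (boxFaces x m) (boxFaces y m) :=
  Finset.disjoint_left.2 fun Q hx hy => by
    have := abs_le.1 (abs_sub_le_of_mem_boxFaces hx i)
    have := abs_le.1 (abs_sub_le_of_mem_boxFaces hy i)
    rw [lt_abs] at h
    omega

theorem dependsOn_invSizeIn_dualBox (x : Fin d → ℤ) (m : ℕ) :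
    DependsOn (fun ω => invSizeIn ω (dualBox x m) x) ↑(boxFaces x m) := by
  have hcongr : ∀ ω ω' : Face d → Bool, (∀ Q ∈ boxFaces x m, ω Q = ω' Q) →
      dualCluster ω x ⊆ dualBox x m → dualCluster ω' x = dualCluster ω x :=
    fun ω ω' h hbox => dualCluster_congr hbox fun y hy z hyz Q hQ =>
      h Q (faceBetween_mem_boxFaces hy hyz hQ)
  intro ω ω' h
  simp only [Finset.mem_coe] at h
  dsimp only [invSizeIn]
  by_cases hbox : dualCluster ω x ⊆ dualBox x m
  · rw [hcongr ω ω' h hbox]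
  · have hbox' : ¬ dualCluster ω' x ⊆ dualBox x m := fun hbox' =>
      hbox (hcongr ω' ω (fun Q hQ => (h Q hQ).symm) hbox' ▸ hbox')
    rw [if_neg hbox, if_neg hbox']

end Locality

section Translation

variable {d : ℕ}

def faceShift (v : Fin d → ℤ) : Face d ≃ Face d :=
  (Equiv.piCongrRight fun i => (Equiv.addRight (v i)).prodCongr (Equiv.refl Bool)).subtypeEquiv
    fun _ => Iff.rfl

theorem faceShift_apply_coe (v : Fin d → ℤ) (Q : Face d) (i : Fin d) :
    (faceShift v Q).1 i = ((Q.1 i).1 + v i, (Q.1 i).2) :=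
  rfl

theorem faceBetween_add (a b v : Fin d → ℤ) (i : Fin d) :
    faceBetween (a + v) (b + v) i = ((faceBetween a b i).1 + v i, (faceBetween a b i).2) := by
  simp only [faceBetween, Pi.add_apply, add_left_inj]
  split_ifs <;> simp [max_add_add_right]

theorem adjZ_add_right {a b : Fin d → ℤ} (v : Fin d → ℤ) : adjZ (a + v) (b + v) ↔ adjZ a b := by
  simp [adjZ, add_sub_add_right_eq_sub]

theorem dualOpen_comp_faceShift (ω : Face d → Bool) (v a b : Fin d → ℤ) :
    dualOpen (ω ∘ faceShift v) a b ↔ dualOpen ω (a + v) (b + v) := by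
  have hface : ∀ Q : Face d,
      (faceShift v Q).1 = faceBetween (a + v) (b + v) ↔ Q.1 = faceBetween a b := fun Q => by
    simp only [funext_iff, faceShift_apply_coe, faceBetween_add, Prod.ext_iff, add_left_inj]
  simp only [dualOpen, adjZ_add_right, Function.comp_apply]
  refine and_congr_right fun _ => ⟨fun h Q hQ => ?_, fun h Q hQ => h _ ((hface Q).2 hQ)⟩
  rw [← (faceShift v).apply_symm_apply Q]
  exact h _ ((hface _).1 (by rwa [Equiv.apply_symm_apply]))

theorem dualCluster_comp_faceShift (ω : Face d → Bool) (v x : Fin d → ℤ) :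
    dualCluster (ω ∘ faceShift v) x = Equiv.addRight v ⁻¹' dualCluster ω (x + v) := by
  ext y
  refine ⟨fun h => ReflTransGen.lift _ (fun a b => (dualOpen_comp_faceShift ω v a b).1) _ _ h,
    fun h => ?_⟩
  have : ReflTransGen (dualOpen (ω ∘ faceShift v)) (x + v - v) (y + v - v) :=
    ReflTransGen.lift (fun z => z - v)
      (fun a b hab => (dualOpen_comp_faceShift ω v (a - v) (b - v)).2 (by simpa using hab)) _ _ h
  simpa [dualCluster] using this

theorem invSizeIn_dualBox_comp_faceShift (ω : Face d → Bool) (x : Fin d → ℤ) (m : ℕ) :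
    invSizeIn (ω ∘ faceShift x) (dualBox (0 : Fin d → ℤ) m) 0 = invSizeIn ω (dualBox x m) x := by
  have hbox : (dualBox (0 : Fin d → ℤ) m : Set (Fin d → ℤ)) = Equiv.addRight x ⁻¹' dualBox x m := by
    ext y
    simp [mem_dualBox]
  have hcard : (Equiv.addRight x ⁻¹' dualCluster ω x).ncard = (dualCluster ω x).ncard :=
    ncard_preimage_of_injective_subset_range (Equiv.injective _) fun y _ => ⟨y - x, by simp⟩
  unfold invSizeIn
  rw [dualCluster_comp_faceShift, zero_add, hbox, Equiv.preimage_subset, hcard]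

end Translation

section BernoulliProduct

variable {I : Type*} {p : ℝ} {μ ν : Measure (I → Bool)}

theorem _root_.DependsOn.exists_eq_comp_restrict {β : Type*} {g : (I → Bool) → β}
    {F : Finset I} (hg : DependsOn g F) : ∃ h : (F → Bool) → β, g = h ∘ F.restrict := by
  classical
  exact ⟨fun η => g (Function.updateFinset (fun _ => false) F η),
    funext fun _ => hg fun i hi => by simp [Function.updateFinset, Finset.mem_coe.1 hi]⟩

theorem _root_.DependsOn.measurable_of_finset {β : Type*} [MeasurableSpace β]
    {g : (I → Bool) → β} {F : Finset I} (hg : DependsOn g F) : Measurable g := by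
  obtain ⟨h, rfl⟩ := hg.exists_eq_comp_restrict
  exact (measurable_of_countable h).comp F.measurable_restrict

theorem setOf_forall_mem_eq_restrict_preimage (F : Finset I) (b : I → Bool) :
    {ω : I → Bool | ∀ i ∈ F, ω i = b i} = F.restrict ⁻¹' ({F.restrict b} : Set (F → Bool)) := by
  ext ω
  simp [funext_iff]

namespace IsBernoulliProduct

theorem measure_restrict_preimage (hμ : IsBernoulliProduct p μ) (F : Finset I) (b : I → Bool) :
    μ (F.restrict ⁻¹' ({F.restrict b} : Set (F → Bool)))
      = ∏ i ∈ F, if b i = true then ENNReal.ofReal p else ENNReal.ofReal (1 - p) := by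
  rw [← setOf_forall_mem_eq_restrict_preimage, hμ.2]

theorem map_restrict_eq (hμ : IsBernoulliProduct p μ) (hν : IsBernoulliProduct p ν)
    (F : Finset I) : μ.map F.restrict = ν.map F.restrict := by
  classical
  refine Measure.ext_of_singleton fun η => ?_
  rw [← Function.restrict_updateFinset (fun _ => false) η,
    Measure.map_apply F.measurable_restrict (measurableSet_singleton _),
    Measure.map_apply F.measurable_restrict (measurableSet_singleton _),
    hμ.measure_restrict_preimage, hν.measure_restrict_preimage]

theorem integral_eq_of_dependsOn (hμ : IsBernoulliProduct p μ) (hν : IsBernoulliProduct p ν)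
    {g : (I → Bool) → ℝ} {F : Finset I} (hg : DependsOn g F) :
    ∫ ω, g ω ∂μ = ∫ ω, g ω ∂ν := by
  obtain ⟨h, rfl⟩ := hg.exists_eq_comp_restrict
  have hmeas := measurable_of_countable h
  simp only [Function.comp_apply]
  rw [← integral_map F.measurable_restrict.aemeasurable hmeas.aestronglyMeasurable,
    ← integral_map F.measurable_restrict.aemeasurable hmeas.aestronglyMeasurable,
    hμ.map_restrict_eq hν]

theorem indepFun_restrict (hμ : IsBernoulliProduct p μ) {F₁ F₂ : Finset I}
    (hF : Disjoint F₁ F₂) : IndepFun F₁.restrict F₂.restrict μ := by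
  classical
  have := hμ.1
  rw [indepFun_iff_map_prod_eq_prod_map_map F₁.measurable_restrict.aemeasurable
    F₂.measurable_restrict.aemeasurable]
  refine Measure.ext_of_singleton fun ⟨η₁, η₂⟩ => ?_
  set b := Function.updateFinset (Function.updateFinset (fun _ => false) F₂ η₂) F₁ η₁
  have hb₁ : F₁.restrict b = η₁ := Function.restrict_updateFinset _ _
  have hb₂ : F₂.restrict b = η₂ := by
    ext i
    simp [b, Function.updateFinset, Finset.disjoint_right.1 hF i.2]
  have hpair : (fun ω : I → Bool => (F₁.restrict ω, F₂.restrict ω)) ⁻¹' {(η₁, η₂)}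
      = (F₁ ∪ F₂).restrict ⁻¹' ({(F₁ ∪ F₂).restrict b} : Set (↥(F₁ ∪ F₂) → Bool)) := by
    rw [← hb₁, ← hb₂, ← setOf_forall_mem_eq_restrict_preimage]
    ext ω
    simp [funext_iff, or_imp, forall_and]
  rw [Measure.map_apply (F₁.measurable_restrict.prodMk F₂.measurable_restrict)
      (measurableSet_singleton _), hpair, ← singleton_prod_singleton, Measure.prod_prod,
    Measure.map_apply F₁.measurable_restrict (measurableSet_singleton _),
    Measure.map_apply F₂.measurable_restrict (measurableSet_singleton _), ← hb₁, ← hb₂,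
    hμ.measure_restrict_preimage, hμ.measure_restrict_preimage, hμ.measure_restrict_preimage,
    Finset.prod_union hF]

theorem indepFun_of_dependsOn (hμ : IsBernoulliProduct p μ) {F₁ F₂ : Finset I}
    (hF : Disjoint F₁ F₂) {β : Type*} [MeasurableSpace β] {g₁ g₂ : (I → Bool) → β}
    (hg₁ : DependsOn g₁ F₁) (hg₂ : DependsOn g₂ F₂) : IndepFun g₁ g₂ μ := by
  obtain ⟨h₁, rfl⟩ := hg₁.exists_eq_comp_restrict
  obtain ⟨h₂, rfl⟩ := hg₂.exists_eq_comp_restrict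
  exact (hμ.indepFun_restrict hF).comp (measurable_of_countable _) (measurable_of_countable _)

theorem map_comp_equiv (hμ : IsBernoulliProduct p μ) (e : I ≃ I) :
    IsBernoulliProduct p (μ.map fun ω => ω ∘ e) := by
  have := hμ.1
  have he : Measurable fun ω : I → Bool => ω ∘ e := measurable_pi_lambda _ fun i =>
    measurable_pi_apply (e i)
  refine ⟨Measure.isProbabilityMeasure_map he.aemeasurable, fun s b => ?_⟩
  have hpre : (fun ω : I → Bool => ω ∘ e) ⁻¹' {ω | ∀ i ∈ s, ω i = b i}
      = {ω | ∀ j ∈ s.map e.toEmbedding, ω j = b (e.symm j)} := by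
    ext ω
    simp only [mem_preimage, mem_ofPred_eq, Function.comp_apply, Finset.mem_map_equiv]
    exact ⟨fun h j hj => by simpa using h _ hj, fun h i hi => by simpa using h (e i) (by simpa)⟩
  have hmeas : MeasurableSet {ω : I → Bool | ∀ i ∈ s, ω i = b i} := by
    rw [setOf_forall_mem_eq_restrict_preimage]
    exact s.measurable_restrict (measurableSet_singleton _)
  rw [Measure.map_apply he hmeas, hpre, hμ.2, Finset.prod_map]
  simp

end IsBernoulliProduct

end BernoulliProduct

section Probability

variable {Ω ι : Type*} {mΩ : MeasurableSpace Ω} {μ : Measure Ω} [IsProbabilityMeasure μ]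

theorem variance_sum_le_sum_card_of_indepFun {X : ι → Ω → ℝ} (hXm : ∀ i, Measurable (X i))
    (hX : ∀ i ω, X i ω ∈ Icc (0 : ℝ) 1) (near : ι → Finset ι)
    (hindep : ∀ i j, j ∉ near i → IndepFun (X i) (X j) μ) (s : Finset ι) :
    Var[fun ω => ∑ i ∈ s, X i ω; μ] ≤ ∑ i ∈ s, ((near i).card : ℝ) := by
  classical
  have hnorm : ∀ i ω, ‖X i ω‖ ≤ 1 := fun i ω => by
    rw [Real.norm_eq_abs, abs_le]
    exact ⟨by linarith [(hX i ω).1], (hX i ω).2⟩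
  have hL2 : ∀ i, MemLp (X i) 2 μ := fun i =>
    MemLp.of_bound (hXm i).aestronglyMeasurable 1 (ae_of_all _ (hnorm i))
  have hcov : ∀ i j, cov[X i, X j; μ] ≤ if j ∈ near i then 1 else 0 := by
    intro i j
    split_ifs with hj
    · have hprod : μ[X i * X j] ≤ 1 := by
        have hint : Integrable (X i * X j) μ :=
          Integrable.of_bound ((hXm i).mul (hXm j)).aestronglyMeasurable 1 (ae_of_all _ fun ω =>
            (norm_mul (X i ω) (X j ω)).trans_le
              (mul_le_one₀ (hnorm i ω) (norm_nonneg _) (hnorm j ω)))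
        simpa using integral_mono hint (integrable_const 1) fun ω =>
          mul_le_one₀ (hX i ω).2 (hX j ω).1 (hX j ω).2
      have hmeans : 0 ≤ μ[X i] * μ[X j] := mul_nonneg
        (integral_nonneg fun ω => (hX i ω).1) (integral_nonneg fun ω => (hX j ω).1)
      rw [covariance_eq_sub (hL2 i) (hL2 j)]
      linarith
    · exact ((hindep i j hj).covariance_eq_zero (hL2 i) (hL2 j)).le
  rw [variance_fun_sum' fun i _ => hL2 i]
  refine Finset.sum_le_sum fun i _ => ?_
  calc ∑ j ∈ s, cov[X i, X j; μ] ≤ ∑ j ∈ s, if j ∈ near i then (1 : ℝ) else 0 :=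
        Finset.sum_le_sum fun j _ => hcov i j
    _ = ((s.filter (· ∈ near i)).card : ℝ) := by rw [Finset.sum_boole]
    _ ≤ (near i).card := by
        exact_mod_cast Finset.card_le_card fun j hj => (Finset.mem_filter.1 hj).2

theorem ae_tendsto_sub_integral_of_summable_variance {Y : ℕ → Ω → ℝ}
    (hY : ∀ n, MemLp (Y n) 2 μ) (hsum : Summable fun n => Var[Y n; μ]) :
    ∀ᵐ ω ∂μ, Tendsto (fun n => Y n ω - μ[Y n]) atTop (𝓝 0) := by
  have hdev : ∀ k : ℕ, ∀ᵐ ω ∂μ, ∀ᶠ n in atTop, ω ∉ {ω | 1 / ((k : ℝ) + 1) ≤ |Y n ω - μ[Y n]|} := by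
    intro k
    have hc : (0 : ℝ) < 1 / ((k : ℝ) + 1) := by positivity
    refine ae_eventually_notMem (ne_top_of_le_ne_top ?_
      (ENNReal.tsum_le_tsum fun n => meas_ge_le_variance_div_sq (hY n) hc))
    rw [← ENNReal.ofReal_tsum_of_nonneg (fun n => div_nonneg (variance_nonneg _ _) (sq_nonneg _))
      (hsum.div_const _)]
    exact ENNReal.ofReal_ne_top
  filter_upwards [ae_all_iff.2 hdev] with ω hω
  refine Metric.tendsto_nhds.2 fun ε hε => ?_
  obtain ⟨k, hk⟩ := exists_nat_one_div_lt hε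
  filter_upwards [hω k] with n hn
  rw [Real.dist_eq, sub_zero]
  exact (not_le.1 hn).trans hk

end Probability

theorem tendsto_of_forall_eventually_abs_sub_le {a : ℕ → ℝ} {b : ℕ → ℕ → ℝ} {c : ℕ → ℝ}
    {L : ℝ} (hb : ∀ m, Tendsto (b m) atTop (𝓝 (c m))) (hc : Tendsto c atTop (𝓝 L))
    (hab : ∀ ε > 0, ∀ᶠ m in atTop, ∀ᶠ n in atTop, |a n - b m n| ≤ ε) :
    Tendsto a atTop (𝓝 L) := by
  refine Metric.tendsto_nhds.2 fun ε hε => ?_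
  obtain ⟨m, hcm, hm⟩ :=
    ((Metric.tendsto_nhds.1 hc (ε / 3) (by positivity)).and (hab (ε / 3) (by positivity))).exists
  filter_upwards [hm, Metric.tendsto_nhds.1 (hb m) (ε / 3) (by positivity)] with n h1 h2
  rw [Real.dist_eq] at *
  linarith [abs_sub_le (a n) (b m n) L, abs_sub_le (b m n) (c m) L]

section Density

variable {d : ℕ} {p : ℝ} {μ : Measure (Face d → Bool)}

theorem measurable_invSizeIn_dualBox (x : Fin d → ℤ) (m : ℕ) :
    Measurable fun ω => invSizeIn ω (dualBox x m) x :=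
  (dependsOn_invSizeIn_dualBox x m).measurable_of_finset

theorem memLp_invSizeIn_dualBox [IsFiniteMeasure μ] (q : ℝ≥0∞) (x : Fin d → ℤ) (m : ℕ) :
    MemLp (fun ω => invSizeIn ω (dualBox x m) x) q μ :=
  MemLp.of_bound (measurable_invSizeIn_dualBox x m).aestronglyMeasurable 1
    (ae_of_all _ fun ω => by
      rw [Real.norm_eq_abs, abs_of_nonneg (invSizeIn_nonneg _ _ _)]
      exact invSizeIn_le_one _ _ _)

theorem integral_invSizeIn_dualBox (hμ : IsBernoulliProduct p μ) (x : Fin d → ℤ) (m : ℕ) :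
    ∫ ω, invSizeIn ω (dualBox x m) x ∂μ = ∫ ω, invSizeIn ω (dualBox (0 : Fin d → ℤ) m) 0 ∂μ := by
  have hshift : Measurable fun ω : Face d → Bool => ω ∘ faceShift x :=
    measurable_pi_lambda _ fun Q => measurable_pi_apply _
  simp_rw [← invSizeIn_dualBox_comp_faceShift _ x m]
  rw [← integral_map hshift.aemeasurable
    (measurable_invSizeIn_dualBox 0 m).aestronglyMeasurable]
  exact (hμ.map_comp_equiv _).integral_eq_of_dependsOn hμ (dependsOn_invSizeIn_dualBox 0 m)

theorem variance_sum_invSizeIn_dualBox_le (hμ : IsBernoulliProduct p μ) (m n : ℕ) :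
    Var[fun ω => ∑ x ∈ window d n, invSizeIn ω (dualBox x m) x; μ]
      ≤ (2 * (n : ℝ)) ^ d * ((4 * m + 5 : ℕ) : ℝ) ^ d := by
  have := hμ.1
  have hindep : ∀ x y : Fin d → ℤ, y ∉ dualBox x (2 * m + 2) →
      IndepFun (fun ω => invSizeIn ω (dualBox x m) x) (fun ω => invSizeIn ω (dualBox y m) y) μ := by
    intro x y hy
    obtain ⟨i, hi⟩ : ∃ i, 2 * (m : ℤ) + 2 < |x i - y i| := by
      simpa [mem_dualBox, abs_sub_comm] using hy
    exact hμ.indepFun_of_dependsOn (disjoint_boxFaces i hi) (dependsOn_invSizeIn_dualBox x m)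
      (dependsOn_invSizeIn_dualBox y m)
  refine (variance_sum_le_sum_card_of_indepFun (measurable_invSizeIn_dualBox · m)
    (fun x ω => ⟨invSizeIn_nonneg _ _ _, invSizeIn_le_one _ _ _⟩) _ hindep _).trans_eq ?_
  simp only [card_dualBox, Finset.sum_const, nsmul_eq_mul, card_window]
  push_cast
  ring

theorem ae_tendsto_sum_invSizeIn_dualBox_div (hd : 2 ≤ d) (hμ : IsBernoulliProduct p μ)
    (m : ℕ) :
    ∀ᵐ ω ∂μ, Tendsto
      (fun n : ℕ => (∑ x ∈ window d n, invSizeIn ω (dualBox x m) x) / (2 * (n : ℝ)) ^ d) atTop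
      (𝓝 (∫ ω, invSizeIn ω (dualBox (0 : Fin d → ℤ) m) 0 ∂μ)) := by
  have := hμ.1
  set Y : ℕ → (Face d → Bool) → ℝ :=
    fun n ω => (∑ x ∈ window d n, invSizeIn ω (dualBox x m) x) * ((2 * (n : ℝ)) ^ d)⁻¹
  have hY : ∀ n, MemLp (Y n) 2 μ := fun n =>
    (memLp_finsetSum _ fun x _ => memLp_invSizeIn_dualBox 2 x m).mul_const _
  have hvar : ∀ n, Var[Y n; μ] ≤ ((4 * m + 5 : ℕ) : ℝ) ^ d / 2 ^ d * (1 / (n : ℝ) ^ d) := by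
    intro n
    rw [variance_mul_const]
    rcases n.eq_zero_or_pos with rfl | hn
    · simp [zero_pow (by omega : d ≠ 0)]
    calc Var[_; μ] * (((2 * (n : ℝ)) ^ d)⁻¹) ^ 2
        ≤ (2 * (n : ℝ)) ^ d * ((4 * m + 5 : ℕ) : ℝ) ^ d * (((2 * (n : ℝ)) ^ d)⁻¹) ^ 2 :=
          mul_le_mul_of_nonneg_right (variance_sum_invSizeIn_dualBox_le hμ m n) (by positivity)
      _ = _ := by
          rw [mul_pow]
          field_simp
  have hsum : Summable fun n => Var[Y n; μ] :=
    ((Real.summable_one_div_nat_pow.2 hd).mul_left _).of_nonneg_of_le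
      (fun n => variance_nonneg _ _) hvar
  have hmean : ∀ᶠ n in atTop, μ[Y n] = ∫ ω, invSizeIn ω (dualBox (0 : Fin d → ℤ) m) 0 ∂μ := by
    filter_upwards [eventually_gt_atTop 0] with n hn
    simp only [Y]
    rw [integral_mul_const, integral_finsetSum _ fun x _ =>
      memLp_one_iff_integrable.1 (memLp_invSizeIn_dualBox 1 x m),
      Finset.sum_congr rfl fun x _ => integral_invSizeIn_dualBox hμ x m, Finset.sum_const,
      nsmul_eq_mul, card_window]
    field_simp
  filter_upwards [ae_tendsto_sub_integral_of_summable_variance hY hsum] with ω hω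
  simpa [Y, div_eq_mul_inv] using
    hω.add (tendsto_const_nhds.congr' (hmean.mono fun n hn => hn.symm))

end Density

section Sandwich

variable {d : ℕ}

theorem sum_invSizeIn_window_le (ω : Face d → Bool) (m n : ℕ) :
    ∑ x ∈ window d n, invSizeIn ω (BnZ d n) x
      ≤ ∑ x ∈ window d n, invSizeIn ω (dualBox x m) x + (window d n).card * ((m : ℝ) + 1)⁻¹ := by
  rw [← nsmul_eq_mul, ← Finset.sum_const, ← Finset.sum_add_distrib]
  exact Finset.sum_le_sum fun x _ =>
    (invSizeIn_le_inv_ncard ω _ x).trans (inv_ncard_le_invSizeIn_dualBox_add ω x m)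

theorem sum_invSizeIn_dualBox_le (ω : Face d → Bool) (m n : ℕ) :
    ∑ x ∈ window d n, invSizeIn ω (dualBox x m) x
      ≤ ∑ x ∈ window d n, invSizeIn ω (BnZ d n) x
        + ((window d n).card - (window d (n - m)).card) := by
  have hsub : window d (n - m) ⊆ window d n := fun x hx =>
    dualBox_subset_window hx (mem_dualBox.2 fun i => by simp)
  have hinner : ∑ x ∈ window d (n - m), invSizeIn ω (dualBox x m) x
      ≤ ∑ x ∈ window d n, invSizeIn ω (BnZ d n) x :=
    calc _ ≤ ∑ x ∈ window d (n - m), invSizeIn ω (BnZ d n) x :=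
          Finset.sum_le_sum fun x hx => invSizeIn_mono ω
            (by rw [← coe_window]; exact_mod_cast dualBox_subset_window hx) x
      _ ≤ _ := Finset.sum_le_sum_of_subset_of_nonneg hsub fun x _ _ => invSizeIn_nonneg _ _ _
  have hboundary : ∑ x ∈ window d n \ window d (n - m), invSizeIn ω (dualBox x m) x
      ≤ (window d n).card - (window d (n - m)).card := by
    rw [← Nat.cast_sub (Finset.card_le_card hsub), ← Finset.card_sdiff_of_subset hsub]
    simpa using Finset.sum_le_sum fun x (_ : x ∈ window d n \ window d (n - m)) =>
      invSizeIn_le_one ω (dualBox x m) x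
  rw [← Finset.sum_sdiff hsub]
  linarith

theorem tendsto_card_window_sub_div (d m : ℕ) :
    Tendsto (fun n : ℕ => (2 * ((n - m : ℕ) : ℝ)) ^ d / (2 * (n : ℝ)) ^ d) atTop (𝓝 1) := by
  have hlim : Tendsto (fun n : ℕ => (1 - (m : ℝ) / n) ^ d) atTop (𝓝 1) := by
    simpa using ((tendsto_const_nhds (x := (1 : ℝ))).sub
      (tendsto_const_div_atTop_nhds_zero_nat (m : ℝ))).pow d
  refine hlim.congr' ((eventually_gt_atTop m).mono fun n hn => ?_)
  have hn' : (0 : ℝ) < n := by exact_mod_cast (m.zero_le.trans_lt hn)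
  dsimp only
  rw [Nat.cast_sub hn.le, ← div_pow]
  congr 1
  field_simp

theorem abs_sum_invSizeIn_window_div_sub_le (ω : Face d → Bool) (m : ℕ) {n : ℕ} (hn : 0 < n) :
    |(∑ x ∈ window d n, invSizeIn ω (BnZ d n) x) / (2 * (n : ℝ)) ^ d
        - (∑ x ∈ window d n, invSizeIn ω (dualBox x m) x) / (2 * (n : ℝ)) ^ d|
      ≤ ((m : ℝ) + 1)⁻¹ + (1 - (2 * ((n - m : ℕ) : ℝ)) ^ d / (2 * (n : ℝ)) ^ d) := by
  have hD : (0 : ℝ) < (2 * (n : ℝ)) ^ d := by positivity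
  have hupper := sum_invSizeIn_window_le ω m n
  have hlower := sum_invSizeIn_dualBox_le ω m n
  rw [card_window, card_window] at *
  have hinner : (2 * ((n - m : ℕ) : ℝ)) ^ d ≤ (2 * (n : ℝ)) ^ d :=
    pow_le_pow_left₀ (by positivity) (by gcongr; exact_mod_cast n.sub_le m) d
  have hexpand : (((m : ℝ) + 1)⁻¹ + (1 - (2 * ((n - m : ℕ) : ℝ)) ^ d / (2 * (n : ℝ)) ^ d))
      * (2 * (n : ℝ)) ^ d
      = (2 * (n : ℝ)) ^ d * ((m : ℝ) + 1)⁻¹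
        + ((2 * (n : ℝ)) ^ d - (2 * ((n - m : ℕ) : ℝ)) ^ d) := by
    field_simp
  have hm : 0 ≤ (2 * (n : ℝ)) ^ d * ((m : ℝ) + 1)⁻¹ := by positivity
  rw [← sub_div, abs_div, abs_of_pos hD, div_le_iff₀ hD, hexpand, abs_le]
  constructor <;> linarith

end Sandwich

theorem tendsto_integral_invSizeIn_dualBox {d : ℕ} {μ : Measure (Face d → Bool)}
    [IsProbabilityMeasure μ] :
    Tendsto (fun m : ℕ => ∫ ω, invSizeIn ω (dualBox (0 : Fin d → ℤ) m) 0 ∂μ) atTop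
      (𝓝 (∫ ω, ((dualCluster ω 0).ncard : ℝ)⁻¹ ∂μ)) := by
  refine tendsto_integral_of_dominated_convergence (fun _ => 1)
    (fun m => (measurable_invSizeIn_dualBox 0 m).aestronglyMeasurable) (integrable_const 1)
    (fun m => ae_of_all _ fun ω => ?_) (ae_of_all _ fun ω => ?_)
  · rw [Real.norm_eq_abs, abs_of_nonneg (invSizeIn_nonneg _ _ _)]
    exact invSizeIn_le_one _ _ _
  · refine tendsto_of_tendsto_of_tendsto_of_le_of_le ?_ tendsto_const_nhds
      (fun m => sub_le_iff_le_add.2 (inv_ncard_le_invSizeIn_dualBox_add ω 0 m))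
      (fun m => invSizeIn_le_inv_ncard ω _ 0)
    simpa using (tendsto_const_nhds (x := ((dualCluster ω 0).ncard : ℝ)⁻¹)).sub
      tendsto_one_div_add_atTop_nhds_zero_nat

theorem hole_vertex_density_general {d : ℕ} (hd : 2 ≤ d) (p : ℝ)
    (μ : Measure (Face d → Bool)) (hμ : IsBernoulliProduct p μ) :
    ∀ᵐ ω ∂μ, Filter.Tendsto
      (fun n : ℕ =>
        ({C : Set (Fin d → ℤ) | (∃ x, C = dualCluster ω x) ∧ C.Finite ∧ C ⊆ BnZ d n}.ncard : ℝ)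
          / (2 * (n : ℝ)) ^ d)
      Filter.atTop
      (nhds (∫ ω', ((dualCluster ω' 0).ncard : ℝ)⁻¹ ∂μ)) := by
  have := hμ.1
  filter_upwards [ae_all_iff.2 (ae_tendsto_sum_invSizeIn_dualBox_div hd hμ)] with ω hω
  refine tendsto_of_forall_eventually_abs_sub_le hω tendsto_integral_invSizeIn_dualBox
    fun ε hε => ?_
  have hsmall : ∀ᶠ m : ℕ in atTop, ((m : ℝ) + 1)⁻¹ < ε / 2 := by
    simpa only [one_div] using
      tendsto_one_div_add_atTop_nhds_zero_nat.eventually (gt_mem_nhds (half_pos hε))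
  filter_upwards [hsmall] with m hm
  have hinner := (tendsto_card_window_sub_div d m).eventually
    (Ioi_mem_nhds (by linarith : 1 - ε / 2 < 1))
  filter_upwards [hinner, eventually_gt_atTop 0] with n hn hn0
  rw [ncard_dualClusters_subset_eq_sum]
  exact (abs_sum_invSizeIn_window_div_sub_le ω m hn0).trans (by linarith)

/-- almost surely, the number of vertices of the hole graph in the
window — i.e. the number of finite dual clusters entirely contained in `B̃(n)` —
divided by `|B̃(n)| = (2n)^d` converges to `κ(1-p) = E[|C*(0*)|⁻¹]` (with the
convention `|C|⁻¹ = 0` for infinite clusters, via `Set.ncard = 0`). -/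
theorem hole_vertex_density {d : ℕ} (hd : 2 ≤ d) (p : ℝ) (hp0 : 0 ≤ p) (hp1 : p ≤ 1)
    (μ : Measure (Face d → Bool)) (hμ : IsBernoulliProduct p μ) :
    ∀ᵐ ω ∂μ, Filter.Tendsto
      (fun n : ℕ =>
        ({C : Set (Fin d → ℤ) | (∃ x, C = dualCluster ω x) ∧ C.Finite ∧ C ⊆ BnZ d n}.ncard : ℝ)
          / (2 * (n : ℝ)) ^ d)
      Filter.atTop
      (nhds (∫ ω', ((dualCluster ω' 0).ncard : ℝ)⁻¹ ∂μ)) :=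
  hole_vertex_density_general hd p μ hμ

end
end HP
end
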